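/- arXiv:1712.06725 — 5 statements merged into one kernel-verified Lean document; each statement's English description precedes it below -/
import Mathlib

section
/- Let ⋆₁ and ⋆₂ be finite-type star operations on an integral domain R with ⋆₁ ≤ ⋆₂. If M is simultaneously a maximal ⋆₁-ideal and a maximal ⋆₂-ideal of R, and M is ⋆₁-potent, then M is ⋆₂-potent. -/
open FractionalIdeal

/-- The fractional ideals of `R` inside its field of fractions. -/
abbrev FracId (R : Type*) [CommRing R] : Type _ :=
  FractionalIdeal (nonZeroDivisors R) (FractionRing R)

/-- A star operation on an integral domain `R`: a map on nonzero fractional ideals satisfying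
`(cA)⋆ = c·A⋆`, `R⋆ = R`, `A ⊆ A⋆`, monotonicity, and idempotence.  (The value on the zero
ideal is irrelevant.) -/
structure StarOp (R : Type*) [CommRing R] [IsDomain R] where
  star : FracId R → FracId R
  star_smul : ∀ c : FractionRing R, c ≠ 0 → ∀ I : FracId R, I ≠ 0 →
    star (spanSingleton (nonZeroDivisors R) c * I) = spanSingleton (nonZeroDivisors R) c * star I
  star_one : star 1 = 1
  le_star : ∀ I : FracId R, I ≠ 0 → I ≤ star I
  star_mono : ∀ I J : FracId R, I ≠ 0 → J ≠ 0 → I ≤ J → star I ≤ star J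
  star_idem : ∀ I : FracId R, I ≠ 0 → star (star I) = star I

namespace StarOp

variable {R : Type*} [CommRing R] [IsDomain R]

/-- A star operation has finite type if `A⋆` is the union of `J⋆` over the nonzero finitely
generated (fractional) subideals `J` of `A`. -/
def FiniteType (s : StarOp R) : Prop :=
  ∀ I : FracId R, I ≠ 0 → ∀ x : FractionRing R, (x ∈ s.star I ↔
    ∃ J : FracId R, J ≠ 0 ∧ (J : Submodule R (FractionRing R)).FG ∧ J ≤ I ∧ x ∈ s.star J)

/-- `⋆₁ ≤ ⋆₂` : `I^⋆₁ ⊆ I^⋆₂` for every nonzero fractional ideal `I`. -/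
def le (s₁ s₂ : StarOp R) : Prop := ∀ I : FracId R, I ≠ 0 → s₁.star I ≤ s₂.star I

/-- A (nonzero integral) `⋆`-ideal: an ideal with `I⋆ = I`. -/
def IsStarIdeal (s : StarOp R) (I : Ideal R) : Prop :=
  I ≠ ⊥ ∧ s.star (I : FracId R) = (I : FracId R)

/-- A maximal `⋆`-ideal: maximal among proper integral `⋆`-ideals. -/
def IsMaxStarIdeal (s : StarOp R) (M : Ideal R) : Prop :=
  M ≠ ⊤ ∧ s.IsStarIdeal M ∧ ∀ J : Ideal R, J ≠ ⊤ → s.IsStarIdeal J → M ≤ J → J = M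

/-- A nonzero ideal `I` is `⋆`-invertible if `(I·I⁻¹)⋆ = R`. -/
def IsStarInvertible (s : StarOp R) (I : Ideal R) : Prop :=
  I ≠ ⊥ ∧ s.star ((I : FracId R) * ((1 : FracId R) / (I : FracId R))) = 1

/-- A nonzero finitely generated ideal is `⋆`-rigid if it is contained in exactly one maximal
`⋆`-ideal. -/
def IsRigid (s : StarOp R) (I : Ideal R) : Prop :=
  I ≠ ⊥ ∧ I.FG ∧ ∃! M : Ideal R, s.IsMaxStarIdeal M ∧ I ≤ M

/-- A `⋆`-rigid ideal is `⋆`-super rigid if every finitely generated ideal containing it is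
`⋆`-invertible. -/
def IsSuperRigid (s : StarOp R) (I : Ideal R) : Prop :=
  s.IsRigid I ∧ ∀ J : Ideal R, J.FG → I ≤ J → s.IsStarInvertible J

/-- A maximal `⋆`-ideal is `⋆`-potent if it contains a `⋆`-rigid ideal. -/
def IsPotent (s : StarOp R) (M : Ideal R) : Prop :=
  s.IsMaxStarIdeal M ∧ ∃ I : Ideal R, s.IsRigid I ∧ I ≤ M

/-- A maximal `⋆`-ideal is `⋆`-super potent if it contains a `⋆`-super rigid ideal. -/
def IsSuperPotent (s : StarOp R) (M : Ideal R) : Prop :=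
  s.IsMaxStarIdeal M ∧ ∃ I : Ideal R, s.IsSuperRigid I ∧ I ≤ M

/-- `R` is `⋆`-potent if every maximal `⋆`-ideal is `⋆`-potent. -/
def PotentDomain (s : StarOp R) : Prop :=
  ∀ M : Ideal R, s.IsMaxStarIdeal M → s.IsPotent M

/-- `R` is `⋆`-super potent if every maximal `⋆`-ideal is `⋆`-super potent. -/
def SuperPotentDomain (s : StarOp R) : Prop :=
  ∀ M : Ideal R, s.IsMaxStarIdeal M → s.IsSuperPotent M

end StarOp

section TOperation

variable {R : Type*} [CommRing R] [IsDomain R]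

/-- The `v`-operation `J ↦ (J⁻¹)⁻¹` on fractional ideals. -/
noncomputable def vOp (J : FracId R) : FracId R :=
  (1 : FracId R) / ((1 : FracId R) / J)

/-- The `t`-closure of a fractional ideal: the union of `J^v` over all nonzero finitely
generated subideals `J` (realized as a submodule of the fraction field). -/
noncomputable def tOp (I : FracId R) : Submodule R (FractionRing R) :=
  ⨆ J ∈ {J : FracId R | J ≠ 0 ∧ (J : Submodule R (FractionRing R)).FG ∧ J ≤ I},
    ((vOp J : FracId R) : Submodule R (FractionRing R))

/-- A (nonzero integral) `t`-ideal. -/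
def IsTIdeal (I : Ideal R) : Prop :=
  I ≠ ⊥ ∧ tOp (I : FracId R) = ((I : FracId R) : Submodule R (FractionRing R))

/-- A maximal `t`-ideal: maximal among proper integral `t`-ideals. -/
def IsMaxTIdeal (M : Ideal R) : Prop :=
  M ≠ ⊤ ∧ IsTIdeal M ∧ ∀ J : Ideal R, J ≠ ⊤ → IsTIdeal J → M ≤ J → J = M

/-- A nonzero ideal `I` is `t`-invertible if `(I·I⁻¹)^t = R`. -/
def IsTInvertible (I : Ideal R) : Prop :=
  I ≠ ⊥ ∧ tOp ((I : FracId R) * ((1 : FracId R) / (I : FracId R))) =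
    ((1 : FracId R) : Submodule R (FractionRing R))

/-- A nonzero finitely generated ideal is `t`-rigid if it is contained in exactly one maximal
`t`-ideal. -/
def IsTRigid (I : Ideal R) : Prop :=
  I ≠ ⊥ ∧ I.FG ∧ ∃! M : Ideal R, IsMaxTIdeal M ∧ I ≤ M

/-- A `t`-rigid ideal is `t`-super rigid if every finitely generated ideal containing it is
`t`-invertible. -/
def IsTSuperRigid (I : Ideal R) : Prop :=
  IsTRigid I ∧ ∀ J : Ideal R, J.FG → I ≤ J → IsTInvertible J

/-- A maximal `t`-ideal is `t`-potent if it contains a `t`-rigid ideal. -/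
def IsTPotent (M : Ideal R) : Prop :=
  IsMaxTIdeal M ∧ ∃ I : Ideal R, IsTRigid I ∧ I ≤ M

/-- A maximal `t`-ideal is `t`-super potent if it contains a `t`-super rigid ideal. -/
def IsTSuperPotent (M : Ideal R) : Prop :=
  IsMaxTIdeal M ∧ ∃ I : Ideal R, IsTSuperRigid I ∧ I ≤ M

end TOperation

/-- `R` is `t`-potent if every maximal `t`-ideal is `t`-potent. -/
def TPotentDomain (R : Type*) [CommRing R] [IsDomain R] : Prop :=
  ∀ M : Ideal R, IsMaxTIdeal M → IsTPotent M

/-- `R` is `t`-super potent if every maximal `t`-ideal is `t`-super potent. -/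
def TSuperPotentDomain (R : Type*) [CommRing R] [IsDomain R] : Prop :=
  ∀ M : Ideal R, IsMaxTIdeal M → IsTSuperPotent M

/-- An ideal is invertible if `I·I⁻¹ = R` (as fractional ideals). -/
def IsInvertibleIdeal {R : Type*} [CommRing R] [IsDomain R] (I : Ideal R) : Prop :=
  I ≠ ⊥ ∧ (I : FracId R) * ((1 : FracId R) / (I : FracId R)) = 1

/-- An ideal `M` is `d`-super potent if it contains a nonzero finitely generated ideal `I`
such that every finitely generated ideal containing `I` is invertible. -/
def IsDSuperPotent {R : Type*} [CommRing R] [IsDomain R] (M : Ideal R) : Prop :=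
  ∃ I : Ideal R, I ≠ ⊥ ∧ I.FG ∧ I ≤ M ∧ ∀ J : Ideal R, J.FG → I ≤ J → IsInvertibleIdeal J

/-- An ideal `P` is divided (`P = P R_P`): every `x ∈ P` is divisible, within `P`, by every
`s ∉ P`. -/
def IsDividedIdeal {R : Type*} [CommRing R] (P : Ideal R) : Prop :=
  ∀ x ∈ P, ∀ s ∉ P, ∃ y ∈ P, x = s * y

/-- A divided prime ideal. -/
def IsDividedPrime {R : Type*} [CommRing R] (P : Ideal R) : Prop :=
  P.IsPrime ∧ IsDividedIdeal P

/-- A valuation domain: an integral domain in which, for any two elements, one divides the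
other (equivalently, the ideals are totally ordered by inclusion). -/
def IsValuationDomain (A : Type*) [CommRing A] : Prop :=
  IsDomain A ∧ ∀ a b : A, a ∣ b ∨ b ∣ a

/-- A height-one prime: a nonzero prime ideal such that the only prime strictly below it
is `(0)`. -/
def HeightOnePrime {R : Type*} [CommRing R] (P : Ideal R) : Prop :=
  P.IsPrime ∧ P ≠ ⊥ ∧ ∀ Q : Ideal R, Q.IsPrime → Q < P → Q = ⊥

/-- `R` has `t`-dimension one: every maximal `t`-ideal has height one. -/
def TDimensionOne (R : Type*) [CommRing R] [IsDomain R] : Prop :=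
  ∀ M : Ideal R, IsMaxTIdeal M → HeightOnePrime M

/-- `R` is completely integrally closed: if `a ∈ R` is nonzero, `u` is in the fraction field,
and `a·uⁿ ∈ R` for all `n ≥ 1`, then `u ∈ R`. -/
def CompletelyIntegrallyClosed (R : Type*) [CommRing R] [IsDomain R] : Prop :=
  ∀ (a : R) (u : FractionRing R), a ≠ 0 →
    (∀ n : ℕ, 0 < n → ∃ r : R, algebraMap R (FractionRing R) a * u ^ n =
      algebraMap R (FractionRing R) r) →
    ∃ r : R, algebraMap R (FractionRing R) r = u

/-- A Prüfer `v`-multiplication domain: every nonzero finitely generated ideal is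
`t`-invertible. -/
def IsPvMD (R : Type*) [CommRing R] [IsDomain R] : Prop :=
  ∀ I : Ideal R, I ≠ ⊥ → I.FG → IsTInvertible I

/-- `x` (in the fraction field) belongs to the localization `R_P`, i.e. `x = r/s` with
`s ∉ P`. -/
def MemLocalizationAt {R : Type*} [CommRing R] [IsDomain R] (P : Ideal R)
    (x : FractionRing R) : Prop :=
  ∃ r s : R, s ∉ P ∧ algebraMap R (FractionRing R) s * x = algebraMap R (FractionRing R) r

/-- An essential domain: `R` is an intersection (inside its fraction field) of localizations
at primes which are valuation domains. -/
def EssentialDomain (R : Type*) [CommRing R] [IsDomain R] : Prop :=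
  ∃ 𝓟 : Set (Ideal R),
    (∀ P ∈ 𝓟, ∃ hP : P.IsPrime,
      IsValuationDomain (Localization (@Ideal.primeCompl R _ P hP))) ∧
    (∀ x : FractionRing R, (∀ P ∈ 𝓟, MemLocalizationAt P x) ↔
      ∃ r : R, algebraMap R (FractionRing R) r = x)

/-- A generalized Krull domain: `R` is a locally finite intersection of essential rank-one
(height-one) valuation localizations. -/
def GeneralizedKrullDomain (R : Type*) [CommRing R] [IsDomain R] : Prop :=
  ∃ 𝓟 : Set (Ideal R),
    (∀ P ∈ 𝓟, ∃ hP : P.IsPrime, HeightOnePrime P ∧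
      IsValuationDomain (Localization (@Ideal.primeCompl R _ P hP))) ∧
    (∀ x : FractionRing R, (∀ P ∈ 𝓟, MemLocalizationAt P x) ↔
      ∃ r : R, algebraMap R (FractionRing R) r = x) ∧
    (∀ a : R, a ≠ 0 → {P : Ideal R | P ∈ 𝓟 ∧ a ∈ P}.Finite)

section Aux

variable {R : Type*} [CommRing R] [IsDomain R]

/-- A `⋆₂`-ideal is a `⋆₁`-ideal whenever `⋆₁ ≤ ⋆₂`. -/
lemma isStarIdeal_of_le {s₁ s₂ : StarOp R} (hle : s₁.le s₂) {I : Ideal R}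
    (hI : s₂.IsStarIdeal I) : s₁.IsStarIdeal I := by
  obtain ⟨hne, hfix⟩ := hI
  have hne' : (I : FracId R) ≠ 0 := by
    rwa [ne_eq, FractionalIdeal.coeIdeal_eq_zero]
  refine ⟨hne, le_antisymm ?_ (s₁.le_star _ hne')⟩
  calc s₁.star (I : FracId R) ≤ s₂.star (I : FracId R) := hle _ hne'
    _ = (I : FracId R) := hfix

/-- For a finite-type star operation, every proper `⋆`-ideal is contained in a maximal
`⋆`-ideal. -/
lemma exists_maxStarIdeal_ge {s : StarOp R} (hs : s.FiniteType) {N : Ideal R}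
    (hNtop : N ≠ ⊤) (hN : s.IsStarIdeal N) :
    ∃ M : Ideal R, s.IsMaxStarIdeal M ∧ N ≤ M := by
  set T : Set (Ideal R) := {J : Ideal R | J ≠ ⊤ ∧ s.IsStarIdeal J ∧ N ≤ J} with hT
  have hNT : N ∈ T := ⟨hNtop, hN, le_rfl⟩
  have zorn := zorn_le_nonempty₀ T ?_ N hNT
  · obtain ⟨M, hNM, ⟨hMtop, hMstar, hNM'⟩, hmax⟩ := zorn
    refine ⟨M, ⟨hMtop, hMstar, ?_⟩, hNM⟩
    intro J hJtop hJstar hMJ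
    exact le_antisymm (hmax ⟨hJtop, hJstar, hNM.trans hMJ⟩ hMJ) hMJ
  · intro c hcT hchain y hyc
    -- upper bound of a nonempty chain
    set J : Ideal R := sSup c with hJ
    have hdir : DirectedOn (· ≤ ·) c := hchain.directedOn
    have hmemJ : ∀ x : R, x ∈ J ↔ ∃ C ∈ c, x ∈ C := by
      intro x
      exact Submodule.mem_sSup_of_directed ⟨y, hyc⟩ hdir
    have hJle : ∀ C ∈ c, C ≤ J := fun C hC => le_sSup hC
    have hJtop : J ≠ ⊤ := by
      intro h
      have : (1 : R) ∈ J := h ▸ Submodule.mem_top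
      obtain ⟨C, hC, h1⟩ := (hmemJ 1).mp this
      exact (hcT hC).1 (Ideal.eq_top_of_isUnit_mem _ h1 isUnit_one)
    have hJbot : J ≠ ⊥ := by
      intro h
      have := (hcT hyc).2.1.1
      exact this (le_bot_iff.mp (h ▸ hJle y hyc))
    have hJne : (J : FracId R) ≠ 0 := by
      rwa [ne_eq, FractionalIdeal.coeIdeal_eq_zero]
    refine ⟨J, ⟨hJtop, ⟨hJbot, ?_⟩, (hJle y hyc).trans' (hcT hyc).2.2⟩, hJle⟩
    refine le_antisymm ?_ (s.le_star _ hJne)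
    intro x hx
    obtain ⟨F, hFne, hFfg, hFle, hxF⟩ := (hs (J : FracId R) hJne x).mp hx
    obtain ⟨t, ht⟩ := hFfg
    -- each generator lies in the image of some member of the chain
    have hgen : ∀ z ∈ t, ∃ C ∈ c, z ∈ (C : FracId R) := by
      intro z hz
      have hzF : z ∈ F := by
        rw [← FractionalIdeal.mem_coe, ← ht]
        exact Submodule.subset_span hz
      have hzJ : z ∈ (J : FracId R) := hFle hzF
      obtain ⟨r, hrJ, hrz⟩ := FractionalIdeal.mem_coeIdeal _ |>.mp hzJ
      obtain ⟨C, hC, hrC⟩ := (hmemJ r).mp hrJ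
      exact ⟨C, hC, FractionalIdeal.mem_coeIdeal _ |>.mpr ⟨r, hrC, hrz⟩⟩
    -- find a single member of the chain containing all generators of F
    have key : ∀ u : Finset (FractionRing R),
        (∀ z ∈ u, ∃ C ∈ c, z ∈ (C : FracId R)) →
        ∃ C ∈ c, ∀ z ∈ u, z ∈ (C : FracId R) := by
      classical
      intro u
      induction u using Finset.induction_on with
      | empty => exact fun _ => ⟨y, hyc, fun z hz => absurd hz (Finset.notMem_empty z)⟩
      | insert _ _ hau =>
        rename_i a u ih
        intro hu
        obtain ⟨C₁, hC₁, hCall⟩ := ih fun z hz => hu z (Finset.mem_insert_of_mem hz)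
        obtain ⟨C₂, hC₂, haC₂⟩ := hu a (Finset.mem_insert_self a u)
        obtain ⟨D, hD, h₁D, h₂D⟩ := hdir C₁ hC₁ C₂ hC₂
        refine ⟨D, hD, fun z hz => ?_⟩
        rcases Finset.mem_insert.mp hz with rfl | hz
        · exact (FractionalIdeal.coeIdeal_le_coeIdeal _).mpr h₂D haC₂
        · exact (FractionalIdeal.coeIdeal_le_coeIdeal _).mpr h₁D (hCall z hz)
    obtain ⟨C, hC, hCall⟩ := key t hgen
    have hFC : F ≤ (C : FracId R) := by
      rw [← FractionalIdeal.coe_le_coe, ← ht]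
      exact Submodule.span_le.mpr fun z hz => hCall z hz
    have hCne : (C : FracId R) ≠ 0 := by
      rw [ne_eq, FractionalIdeal.coeIdeal_eq_zero]; exact (hcT hC).2.1.1
    have : x ∈ s.star (C : FracId R) := s.star_mono F _ hFne hCne hFC hxF
    rw [(hcT hC).2.1.2] at this
    exact FractionalIdeal.coeIdeal_le_coeIdeal _ |>.mpr (hJle C hC) this

end Aux

/-- If `⋆₁ ≤ ⋆₂` are finite-type star operations, `M` is simultaneously a maximal
`⋆₁`-ideal and a maximal `⋆₂`-ideal, and `M` is `⋆₁`-potent, then `M` is `⋆₂`-potent. -/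
theorem potent_of_star_le {R : Type*} [CommRing R] [IsDomain R]
    (s₁ s₂ : StarOp R) (h₁ : s₁.FiniteType) (h₂ : s₂.FiniteType) (hle : s₁.le s₂)
    (M : Ideal R) (hM₁ : s₁.IsMaxStarIdeal M) (hM₂ : s₂.IsMaxStarIdeal M)
    (hpot : s₁.IsPotent M) : s₂.IsPotent M := by
  obtain ⟨-, I, ⟨hIbot, hIfg, hIuniq⟩, hIM⟩ := hpot
  refine ⟨hM₂, I, ⟨hIbot, hIfg, M, ⟨hM₂, hIM⟩, ?_⟩, hIM⟩
  rintro N ⟨hN, hIN⟩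
  -- N is a proper ⋆₁-ideal, hence contained in some maximal ⋆₁-ideal M'
  have hNstar₁ : s₁.IsStarIdeal N := isStarIdeal_of_le hle hN.2.1
  obtain ⟨M', hM', hNM'⟩ := exists_maxStarIdeal_ge h₁ hN.1 hNstar₁
  -- uniqueness for ⋆₁: M' = M
  obtain ⟨M₀, hM₀, hM₀uniq⟩ := hIuniq
  have e₁ : M' = M₀ := hM₀uniq M' ⟨hM', hIN.trans hNM'⟩
  have e₂ : M = M₀ := hM₀uniq M ⟨hM₁, hIM⟩
  have hNM : N ≤ M := by rw [e₂, ← e₁]; exact hNM'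
  -- maximality of N among ⋆₂-ideals forces M = N
  exact (hN.2.2 M hM₂.1 hM₂.2.1 hNM).symm
end

section
/- Let ⋆₁ and ⋆₂ be finite-type star operations on an integral domain R with ⋆₁ ≤ ⋆₂. If M is a ⋆₁-super potent maximal ⋆₁-ideal of R, then M is also a maximal ⋆₂-ideal of R and M is ⋆₂-super potent. -/
open FractionalIdeal

section AuxLemmas

open FractionalIdeal

variable {R : Type*} [CommRing R] [IsDomain R]

lemma aux_mul_ne_zero {X Y : FracId R} (hX : X ≠ 0) (hY : Y ≠ 0) : X * Y ≠ 0 := by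
  rw [Ne, FractionalIdeal.eq_zero_iff] at hX hY ⊢
  push_neg at hX hY ⊢
  obtain ⟨x, hx, hx0⟩ := hX
  obtain ⟨y, hy, hy0⟩ := hY
  exact ⟨x * y, FractionalIdeal.mul_mem_mul hx hy, mul_ne_zero hx0 hy0⟩

lemma aux_one_ne_zero : (1 : FracId R) ≠ 0 := fun h =>
  one_ne_zero ((FractionalIdeal.eq_zero_iff.mp h) 1 (FractionalIdeal.one_mem_one _))

lemma aux_inv_ne_zero {J : Ideal R} (hJ : J ≠ ⊥) : (1 : FracId R) / (J : FracId R) ≠ 0 := by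
  intro h
  have h1 : (1 : FracId R) ≤ 1 / (J : FracId R) := by
    rw [FractionalIdeal.le_div_iff_mul_le (FractionalIdeal.coeIdeal_ne_zero.mpr hJ), one_mul]
    exact FractionalIdeal.coeIdeal_le_one
  rw [h] at h1
  exact aux_one_ne_zero (le_antisymm h1 (zero_le _))

lemma StarOp.star_ne_zero (s : StarOp R) {I : FracId R} (hI : I ≠ 0) : s.star I ≠ 0 := fun h =>
  hI (le_antisymm (h ▸ s.le_star I hI) (zero_le _))

/-- Key lemma: `X · Y^⋆ ≤ (X·Y)^⋆`. -/
lemma StarOp.mul_star_le (s : StarOp R) {X Y : FracId R} (hX : X ≠ 0) (hY : Y ≠ 0) :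
    X * s.star Y ≤ s.star (X * Y) := by
  rw [FractionalIdeal.mul_le]
  intro i hi j hj
  rcases eq_or_ne i 0 with rfl | hi0
  · rw [zero_mul]
    exact zero_mem _
  · have h1 : spanSingleton (nonZeroDivisors R) i * Y ≠ 0 :=
      aux_mul_ne_zero (spanSingleton_ne_zero_iff.mpr hi0) hY
    have h2 : i * j ∈ spanSingleton (nonZeroDivisors R) i * s.star Y :=
      FractionalIdeal.mul_mem_mul ((mem_spanSingleton_self _ _)) hj
    rw [← s.star_smul i hi0 Y hY] at h2
    refine s.star_mono _ _ h1 (aux_mul_ne_zero hX hY) ?_ h2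
    exact mul_left_mono (a := Y) ((spanSingleton_le_iff_mem).mpr hi)

/-- `⋆₁`-invertibility implies `⋆₂`-invertibility when `⋆₁ ≤ ⋆₂`. -/
lemma StarOp.isStarInvertible_mono (s₁ s₂ : StarOp R) (hle : s₁.le s₂) {J : Ideal R}
    (hJ : s₁.IsStarInvertible J) : s₂.IsStarInvertible J := by
  obtain ⟨hJ0, hJs⟩ := hJ
  have hA : (J : FracId R) ≠ 0 := FractionalIdeal.coeIdeal_ne_zero.mpr hJ0
  have hprod : (J : FracId R) * ((1 : FracId R) / (J : FracId R)) ≠ 0 :=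
    aux_mul_ne_zero hA (aux_inv_ne_zero hJ0)
  refine ⟨hJ0, le_antisymm ?_ (le_trans (le_of_eq hJs.symm) (hle _ hprod))⟩
  calc s₂.star ((J : FracId R) * ((1 : FracId R) / (J : FracId R)))
      ≤ s₂.star 1 := s₂.star_mono _ _ hprod aux_one_ne_zero FractionalIdeal.mul_one_div_le_one
    _ = 1 := s₂.star_one

/-- For a `⋆₁`-invertible ideal, `J^{⋆₂} = J^{⋆₁}` when `⋆₁ ≤ ⋆₂`. -/
lemma StarOp.star_eq_of_invertible (s₁ s₂ : StarOp R) (hle : s₁.le s₂) {J : Ideal R}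
    (hJ : s₁.IsStarInvertible J) :
    s₂.star (J : FracId R) = s₁.star (J : FracId R) := by
  have h2 := (StarOp.isStarInvertible_mono s₁ s₂ hle hJ).2
  set A : FracId R := (J : FracId R) with hAdef
  set B : FracId R := (1 : FracId R) / A with hBdef
  have hA : A ≠ 0 := FractionalIdeal.coeIdeal_ne_zero.mpr hJ.1
  have hB : B ≠ 0 := aux_inv_ne_zero hJ.1
  have hAB : A * B ≠ 0 := aux_mul_ne_zero hA hB
  have hstarA : s₂.star A ≠ 0 := s₂.star_ne_zero hA
  have key : B * s₂.star A ≤ 1 := by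
    calc B * s₂.star A ≤ s₂.star (B * A) := s₂.mul_star_le hB hA
      _ = 1 := by rw [mul_comm]; exact h2
  refine le_antisymm ?_ (hle _ hA)
  have step : s₂.star A * (A * B) ≤ A := by
    calc s₂.star A * (A * B) = (B * s₂.star A) * A := by ring
      _ ≤ 1 * A := mul_left_mono (a := A) key
      _ = A := one_mul A
  calc s₂.star A = s₂.star A * s₁.star (A * B) := by rw [hJ.2, mul_one]
    _ ≤ s₁.star (s₂.star A * (A * B)) := s₁.mul_star_le hstarA hAB
    _ ≤ s₁.star A := s₁.star_mono _ _ (aux_mul_ne_zero hstarA hAB) hA step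

/-- The finite-type property, phrased with integral ideals. -/
lemma StarOp.finchar (s : StarOp R) (hs : s.FiniteType) {N : Ideal R} (hN : N ≠ ⊥)
    {x : FractionRing R} (hx : x ∈ s.star (N : FracId R)) :
    ∃ J : Ideal R, J ≠ ⊥ ∧ J.FG ∧ J ≤ N ∧ x ∈ s.star (J : FracId R) := by
  obtain ⟨J, hJ0, hJfg, hJle, hxJ⟩ :=
    (hs _ (FractionalIdeal.coeIdeal_ne_zero.mpr hN) x).mp hx
  obtain ⟨J₀, rfl⟩ := FractionalIdeal.le_one_iff_exists_coeIdeal.mp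
    (hJle.trans FractionalIdeal.coeIdeal_le_one)
  exact ⟨J₀, FractionalIdeal.coeIdeal_ne_zero.mp hJ0,
    (FractionalIdeal.coeIdeal_fg _ (IsFractionRing.injective R (FractionRing R)) J₀).mp hJfg,
    (FractionalIdeal.coeIdeal_le_coeIdeal _).mp hJle, hxJ⟩

/-- Every proper `⋆`-ideal is contained in a maximal `⋆`-ideal (finite type, Zorn). -/
lemma StarOp.exists_max_star (s : StarOp R) (hs : s.FiniteType) {N : Ideal R} (hN : N ≠ ⊤)
    (hNs : s.IsStarIdeal N) : ∃ M : Ideal R, s.IsMaxStarIdeal M ∧ N ≤ M := by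
  have hub : ∀ c ⊆ {J : Ideal R | J ≠ ⊤ ∧ s.IsStarIdeal J}, IsChain (· ≤ ·) c →
      ∀ y ∈ c, ∃ ub ∈ {J : Ideal R | J ≠ ⊤ ∧ s.IsStarIdeal J}, ∀ z ∈ c, z ≤ ub := by
    intro c hcS hchain y hyc
    have hdir : DirectedOn (· ≤ ·) c := hchain.directedOn
    have hmem : ∀ x : R, x ∈ sSup c ↔ ∃ J ∈ c, x ∈ J := fun x =>
      Submodule.mem_sSup_of_directed ⟨y, hyc⟩ hdir
    have htop : sSup c ≠ ⊤ := by
      intro h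
      obtain ⟨J, hJc, h1J⟩ := (hmem 1).mp (h ▸ Submodule.mem_top)
      exact (hcS hJc).1 ((Ideal.eq_top_iff_one J).mpr h1J)
    have hbot : sSup c ≠ ⊥ := fun h =>
      (hcS hyc).2.1 (le_bot_iff.mp (h ▸ le_sSup hyc))
    refine ⟨sSup c, ⟨htop, hbot, le_antisymm ?_
      (s.le_star _ (FractionalIdeal.coeIdeal_ne_zero.mpr hbot))⟩,
      fun z hz => le_sSup hz⟩
    intro x hx
    obtain ⟨J, hJ0, hJfg, hJle, hxJ⟩ := s.finchar hs hbot hx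
    obtain ⟨C, hCc, hJC⟩ :=
      (CompleteLattice.isCompactElement_iff_le_of_directed_sSup_le (α := Ideal R) J).mp
        ((Submodule.fg_iff_compact J).mp hJfg) c ⟨y, hyc⟩ hdir hJle
    have hC := hcS hCc
    have hx' : x ∈ s.star (C : FracId R) :=
      s.star_mono _ _ (FractionalIdeal.coeIdeal_ne_zero.mpr hJ0)
        (FractionalIdeal.coeIdeal_ne_zero.mpr hC.2.1)
        ((FractionalIdeal.coeIdeal_le_coeIdeal _).mpr hJC) hxJ
    rw [hC.2.2] at hx'
    exact (FractionalIdeal.coeIdeal_le_coeIdeal _).mpr (le_sSup hCc) hx'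
  obtain ⟨m, hNm, hm⟩ := zorn_le_nonempty₀
    {J : Ideal R | J ≠ ⊤ ∧ s.IsStarIdeal J} hub N ⟨hN, hNs⟩
  exact ⟨m, ⟨hm.1.1, hm.1.2, fun J hJt hJs hmJ =>
    le_antisymm (hm.2 ⟨hJt, hJs⟩ hmJ) hmJ⟩, hNm⟩

end AuxLemmas

/-- If `⋆₁ ≤ ⋆₂` are finite-type star operations and `M` is a `⋆₁`-super potent
maximal `⋆₁`-ideal, then `M` is a maximal `⋆₂`-ideal and is `⋆₂`-super potent. -/
theorem superPotent_of_star_le {R : Type*} [CommRing R] [IsDomain R]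
    (s₁ s₂ : StarOp R) (h₁ : s₁.FiniteType) (h₂ : s₂.FiniteType) (hle : s₁.le s₂)
    (M : Ideal R) (hM : s₁.IsSuperPotent M) :
    s₂.IsMaxStarIdeal M ∧ s₂.IsSuperPotent M := by
  obtain ⟨hMmax, I, hIsr, hIM⟩ := hM
  obtain ⟨⟨hI0, hIfg, hex⟩, hsr⟩ := hIsr
  obtain ⟨M₀, hM₀, huniq⟩ := hex
  have hMeq : M₀ = M := (huniq M ⟨hMmax, hIM⟩).symm
  have hMbot : M ≠ ⊥ := fun h => hI0 (le_bot_iff.mp (h ▸ hIM))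
  have hMfrac : (M : FracId R) ≠ 0 := FractionalIdeal.coeIdeal_ne_zero.mpr hMbot
  -- M is a ⋆₂-ideal
  have hstar2 : s₂.star (M : FracId R) = (M : FracId R) := by
    refine le_antisymm ?_ (s₂.le_star _ hMfrac)
    intro x hx
    obtain ⟨J, hJ0, hJfg, hJle, hxJ⟩ := s₂.finchar h₂ hMbot hx
    have hJ'fg : (I ⊔ J).FG := Submodule.FG.sup hIfg hJfg
    have hJ'inv := hsr (I ⊔ J) hJ'fg le_sup_left
    have hJ'bot : I ⊔ J ≠ ⊥ := fun h => hI0 (le_bot_iff.mp (h ▸ le_sup_left))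
    have hJ'frac : ((I ⊔ J : Ideal R) : FracId R) ≠ 0 :=
      FractionalIdeal.coeIdeal_ne_zero.mpr hJ'bot
    have hx' : x ∈ s₂.star ((I ⊔ J : Ideal R) : FracId R) :=
      s₂.star_mono _ _ (FractionalIdeal.coeIdeal_ne_zero.mpr hJ0) hJ'frac
        ((FractionalIdeal.coeIdeal_le_coeIdeal _).mpr le_sup_right) hxJ
    rw [StarOp.star_eq_of_invertible s₁ s₂ hle hJ'inv] at hx'
    have hfin : x ∈ s₁.star (M : FracId R) :=
      s₁.star_mono _ _ hJ'frac hMfrac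
        ((FractionalIdeal.coeIdeal_le_coeIdeal _).mpr (sup_le hIM hJle)) hx'
    rw [hMmax.2.1.2] at hfin
    exact hfin
  have hMstar2 : s₂.IsStarIdeal M := ⟨hMbot, hstar2⟩
  -- M is a maximal ⋆₂-ideal
  have hmax2 : s₂.IsMaxStarIdeal M := by
    refine ⟨hMmax.1, hMstar2, fun J hJt hJs hMJ => ?_⟩
    have hJs1 : s₁.IsStarIdeal J :=
      ⟨hJs.1, le_antisymm (le_trans (hle _ (FractionalIdeal.coeIdeal_ne_zero.mpr hJs.1))
        (le_of_eq hJs.2)) (s₁.le_star _ (FractionalIdeal.coeIdeal_ne_zero.mpr hJs.1))⟩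
    exact hMmax.2.2 J hJt hJs1 hMJ
  refine ⟨hmax2, hmax2, I, ⟨⟨hI0, hIfg, M, ⟨hmax2, hIM⟩, ?_⟩, ?_⟩, hIM⟩
  · -- uniqueness of the maximal ⋆₂-ideal containing I
    rintro N ⟨hNmax2, hIN⟩
    have hNbot : N ≠ ⊥ := hNmax2.2.1.1
    have hNs1 : s₁.IsStarIdeal N :=
      ⟨hNbot, le_antisymm (le_trans (hle _ (FractionalIdeal.coeIdeal_ne_zero.mpr hNbot))
        (le_of_eq hNmax2.2.1.2)) (s₁.le_star _ (FractionalIdeal.coeIdeal_ne_zero.mpr hNbot))⟩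
    obtain ⟨M'', hM''max, hNM''⟩ := s₁.exists_max_star h₁ hNmax2.1 hNs1
    have hM''M : M'' = M := (huniq M'' ⟨hM''max, hIN.trans hNM''⟩).trans hMeq
    have hNM : N ≤ M := hM''M ▸ hNM''
    exact (hNmax2.2.2 M hMmax.1 hMstar2 hNM).symm ▸ rfl
  · -- ⋆₂-invertibility of f.g. overideals
    exact fun J hJfg hIJ => StarOp.isStarInvertible_mono s₁ s₂ hle (hsr J hJfg hIJ)
end

section
/- Let (R, M) be a local integral domain. The following statements are equivalent: (1) M is a ⋆-super potent maximal ⋆-ideal for some finite-type star operation ⋆ on R; (2) M is a t-super potent maximal t-ideal; (3) M is d-super potent, i.e., M contains a nonzero finitely generated ideal I such that every finitely generated ideal of R containing I is invertible; (4) M is a ⋆-super potent maximal ⋆-ideal for every finite-type star operation ⋆ on R. -/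
open FractionalIdeal

section AuxSP

variable {R : Type*} [CommRing R] [IsDomain R]

lemma spFracId_le_iff {I J : FracId R} : I ≤ J ↔ ∀ x ∈ I, x ∈ J := by
  rw [← FractionalIdeal.coe_le_coe]
  exact ⟨fun h x hx => h hx, fun h x hx => h x hx⟩

lemma sp_one_div_ne_zero_of_le_one {I : FracId R} (hI0 : I ≠ 0) (hI1 : I ≤ 1) :
    (1 : FracId R) / I ≠ 0 := by
  intro h
  have h1 : (1 : FractionRing R) ∈ (1 : FracId R) / I := by
    rw [mem_div_iff_of_ne_zero hI0]
    intro y hy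
    rw [one_mul]
    exact spFracId_le_iff.mp hI1 y hy
  rw [h] at h1
  exact one_ne_zero ((FractionalIdeal.mem_zero_iff _).mp h1)

lemma sp_one_div_antitone {I J : FracId R} (hI0 : I ≠ 0) (hIJ : I ≤ J) :
    (1 : FracId R) / J ≤ (1 : FracId R) / I := by
  have hJ0 : J ≠ 0 := fun h => hI0 (le_antisymm (h ▸ hIJ) (FractionalIdeal.zero_le _))
  rw [spFracId_le_iff]
  intro x hx
  rw [mem_div_iff_of_ne_zero hJ0] at hx
  rw [mem_div_iff_of_ne_zero hI0]
  exact fun y hy => hx y (spFracId_le_iff.mp hIJ y hy)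

lemma sp_vOp_mono {I J : FracId R} (hI0 : I ≠ 0) (hJ0 : J ≠ 0) (hJ1 : J ≤ 1)
    (hIJ : I ≤ J) : vOp I ≤ vOp J :=
  sp_one_div_antitone (sp_one_div_ne_zero_of_le_one hJ0 hJ1) (sp_one_div_antitone hI0 hIJ)

lemma sp_vOp_one : vOp (1 : FracId R) = 1 := by
  rw [vOp, FractionalIdeal.div_one, FractionalIdeal.div_one]

lemma sp_le_vOp {I : FracId R} (hI0 : I ≠ 0) (hI1 : I ≤ 1) : I ≤ vOp I :=
  (le_div_iff_mul_le (sp_one_div_ne_zero_of_le_one hI0 hI1)).mpr mul_one_div_le_one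

lemma sp_vOp_eq_self_of_invertible {A : FracId R} (h : A * ((1 : FracId R) / A) = 1) :
    vOp A = A := by
  have hdiv0 : (1 : FracId R) / A ≠ 0 := by
    rintro hd
    rw [hd, mul_zero] at h
    exact one_ne_zero h.symm
  apply le_antisymm
  · rw [spFracId_le_iff]
    intro x hx
    have h1 : spanSingleton (nonZeroDivisors R) x * ((1 : FracId R) / A) ≤ 1 :=
      (le_div_iff_mul_le hdiv0).mp (spanSingleton_le_iff_mem.mpr hx)
    have h2 : spanSingleton (nonZeroDivisors R) x * ((1 : FracId R) / A) * A ≤ 1 * A :=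
      mul_le_mul_left h1 A
    rw [one_mul, mul_assoc, mul_comm ((1 : FracId R) / A) A, h, mul_one] at h2
    exact spFracId_le_iff.mp h2 x (mem_spanSingleton_self _ x)
  · exact (le_div_iff_mul_le hdiv0).mpr h.le

lemma sp_exists_fg_coeIdeal {J : FracId R} (h1 : J ≤ 1)
    (hfg : (J : Submodule R (FractionRing R)).FG) :
    ∃ J₀ : Ideal R, J₀.FG ∧ (J₀ : FracId R) = J := by
  obtain ⟨J₀, rfl⟩ := le_one_iff_exists_coeIdeal.mp h1
  refine ⟨J₀, ?_, rfl⟩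
  rw [coe_coeIdeal] at hfg
  exact (IsLocalization.coeSubmodule_fg _ (IsFractionRing.injective R (FractionRing R)) J₀).mp hfg

lemma sp_vOp_le_coeIdeal_of_dsp {M : Ideal R} (h : IsDSuperPotent M)
    {J : FracId R} (hJ0 : J ≠ 0) (hJfg : (J : Submodule R (FractionRing R)).FG)
    (hJM : J ≤ (M : FracId R)) : vOp J ≤ (M : FracId R) := by
  obtain ⟨I, hI0, hIfg, hIM, hinv⟩ := h
  have hJ1 : J ≤ 1 := hJM.trans coeIdeal_le_one
  obtain ⟨J₀, hJ₀fg, rfl⟩ := sp_exists_fg_coeIdeal hJ1 hJfg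
  have hJ₀M : J₀ ≤ M := (coeIdeal_le_coeIdeal _).mp hJM
  have hKfg : (J₀ ⊔ I).FG := Submodule.FG.sup hJ₀fg hIfg
  obtain ⟨hKne, hKinv⟩ := hinv (J₀ ⊔ I) hKfg le_sup_right
  have hKM : J₀ ⊔ I ≤ M := sup_le hJ₀M hIM
  have h1 : vOp (J₀ : FracId R) ≤ vOp ((J₀ ⊔ I : Ideal R) : FracId R) :=
    sp_vOp_mono hJ0 (coeIdeal_ne_zero.mpr (fun hb => hKne hb)) coeIdeal_le_one
      ((coeIdeal_le_coeIdeal _).mpr le_sup_left)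
  rw [sp_vOp_eq_self_of_invertible hKinv] at h1
  exact h1.trans ((coeIdeal_le_coeIdeal _).mpr hKM)

lemma sp_tOp_mono {I J : FracId R} (h : I ≤ J) : tOp I ≤ tOp J := by
  refine iSup_le fun A => iSup_le fun hA => ?_
  exact le_iSup₂_of_le A ⟨hA.1, hA.2.1, hA.2.2.trans h⟩ le_rfl

lemma sp_tOp_one : tOp (1 : FracId R) = ((1 : FracId R) : Submodule R (FractionRing R)) := by
  apply le_antisymm
  · refine iSup_le fun A => iSup_le fun hA => ?_
    rw [FractionalIdeal.coe_le_coe]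
    have := sp_vOp_mono hA.1 one_ne_zero le_rfl hA.2.2
    rwa [sp_vOp_one] at this
  · intro x hx
    refine Submodule.mem_iSup_of_mem 1 (Submodule.mem_iSup_of_mem ⟨one_ne_zero, ?_, le_rfl⟩ ?_)
    · rw [FractionalIdeal.coe_one, Submodule.one_eq_span]
      exact Submodule.fg_span_singleton _
    · rw [sp_vOp_one]
      exact hx

lemma sp_tOp_coeIdeal_of_dsp {M : Ideal R} (h : IsDSuperPotent M) (hM0 : M ≠ ⊥) :
    tOp (M : FracId R) = ((M : FracId R) : Submodule R (FractionRing R)) := by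
  apply le_antisymm
  · refine iSup_le fun A => iSup_le fun hA => ?_
    rw [FractionalIdeal.coe_le_coe]
    exact sp_vOp_le_coeIdeal_of_dsp h hA.1 hA.2.1 hA.2.2
  · intro x hx
    by_cases hx0 : x = 0
    · rw [hx0]; exact zero_mem _
    · refine Submodule.mem_iSup_of_mem (spanSingleton (nonZeroDivisors R) x)
        (Submodule.mem_iSup_of_mem ⟨?_, ?_, ?_⟩ ?_)
      · rwa [Ne, spanSingleton_eq_zero_iff]
      · rw [coe_spanSingleton]
        exact Submodule.fg_span_singleton _
      · exact spanSingleton_le_iff_mem.mpr hx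
      · rw [vOp, one_div_spanSingleton, one_div_spanSingleton, inv_inv, coe_spanSingleton]
        exact Submodule.mem_span_singleton_self x

lemma sp_star_spanSingleton (s : StarOp R) {c : FractionRing R} (hc : c ≠ 0) :
    s.star (spanSingleton (nonZeroDivisors R) c) = spanSingleton (nonZeroDivisors R) c := by
  have := s.star_smul c hc 1 one_ne_zero
  rwa [mul_one, s.star_one, mul_one] at this

lemma sp_star_le_vOp (s : StarOp R) {J : FracId R} (hJ0 : J ≠ 0) (hJ1 : J ≤ 1) :
    s.star J ≤ vOp J := by
  rw [spFracId_le_iff]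
  intro x hx
  refine (mem_div_iff_of_ne_zero (sp_one_div_ne_zero_of_le_one hJ0 hJ1)).mpr ?_
  intro y hy
  by_cases hy0 : y = 0
  · rw [hy0, mul_zero]
    exact (mem_one_iff _).mpr ⟨0, map_zero _⟩
  · have hJy : J ≤ spanSingleton (nonZeroDivisors R) y⁻¹ := by
      rw [spFracId_le_iff]
      intro z hz
      obtain ⟨r, hr⟩ := (mem_one_iff _).mp ((mem_div_iff_of_ne_zero hJ0).mp hy z hz)
      rw [mem_spanSingleton]
      refine ⟨r, ?_⟩
      rw [Algebra.smul_def, hr]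
      field_simp
    have hmono := s.star_mono J _ hJ0
      (by rw [Ne, spanSingleton_eq_zero_iff]; exact inv_ne_zero hy0) hJy
    rw [sp_star_spanSingleton s (inv_ne_zero hy0)] at hmono
    obtain ⟨r, hr⟩ := (mem_spanSingleton _).mp (spFracId_le_iff.mp hmono x hx)
    rw [← hr, Algebra.smul_def, mul_assoc, inv_mul_cancel₀ hy0, mul_one]
    exact coe_mem_one _ r

lemma sp_star_coeIdeal_of_dsp (s : StarOp R) (hft : s.FiniteType) {M : Ideal R}
    (hdsp : IsDSuperPotent M) (hM0 : M ≠ ⊥) :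
    s.star (M : FracId R) = (M : FracId R) := by
  have hMne : (M : FracId R) ≠ 0 := coeIdeal_ne_zero.mpr hM0
  apply le_antisymm _ (s.le_star _ hMne)
  rw [spFracId_le_iff]
  intro x hx
  obtain ⟨J, hJ0, hJfg, hJM, hxJ⟩ := (hft _ hMne x).mp hx
  have hJ1 : J ≤ 1 := hJM.trans coeIdeal_le_one
  exact spFracId_le_iff.mp (sp_vOp_le_coeIdeal_of_dsp hdsp hJ0 hJfg hJM)
    x (spFracId_le_iff.mp (sp_star_le_vOp s hJ0 hJ1) x hxJ)

/-- The `d`-operation (identity) as a `StarOp`. -/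
def dOp : StarOp R where
  star := id
  star_smul := fun _ _ _ _ => rfl
  star_one := rfl
  le_star := fun _ _ => le_rfl
  star_mono := fun _ _ _ _ h => h
  star_idem := fun _ _ => rfl

lemma dOp_finiteType : (dOp : StarOp R).FiniteType := by
  intro I hI x
  constructor
  · intro hx
    by_cases hx0 : x = 0
    · obtain ⟨y, hyI, hy0⟩ := Submodule.exists_mem_ne_zero_of_ne_bot
        (fun hb => hI (FractionalIdeal.coeToSubmodule_eq_bot.mp hb))
      refine ⟨spanSingleton (nonZeroDivisors R) y, ?_, ?_, ?_, ?_⟩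
      · rw [Ne, spanSingleton_eq_zero_iff]; exact hy0
      · rw [coe_spanSingleton]; exact Submodule.fg_span_singleton _
      · exact spanSingleton_le_iff_mem.mpr hyI
      · rw [hx0]
        exact (spanSingleton (nonZeroDivisors R) y).coeToSubmodule.zero_mem
    · refine ⟨spanSingleton (nonZeroDivisors R) x, ?_, ?_, ?_, ?_⟩
      · rw [Ne, spanSingleton_eq_zero_iff]; exact hx0
      · rw [coe_spanSingleton]; exact Submodule.fg_span_singleton _
      · exact spanSingleton_le_iff_mem.mpr hx
      · exact mem_spanSingleton_self _ x
  · rintro ⟨J, _, _, hJI, hxJ⟩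
    exact spFracId_le_iff.mp hJI x hxJ

end AuxSP
/-- For a local domain `(R, M)` the following are equivalent:
(1) `M` is a `⋆`-super potent maximal `⋆`-ideal for some finite-type star operation;
(2) `M` is a `t`-super potent maximal `t`-ideal;
(3) `M` is `d`-super potent;
(4) `M` is a `⋆`-super potent maximal `⋆`-ideal for every finite-type star operation. -/
theorem local_superPotent_tfae {R : Type*} [CommRing R] [IsDomain R] [IsLocalRing R] :
    List.TFAE
      [∃ s : StarOp R, s.FiniteType ∧ s.IsSuperPotent (IsLocalRing.maximalIdeal R),
       IsTSuperPotent (IsLocalRing.maximalIdeal R),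
       IsDSuperPotent (IsLocalRing.maximalIdeal R),
       ∀ s : StarOp R, s.FiniteType → s.IsSuperPotent (IsLocalRing.maximalIdeal R)] := by
  set M := IsLocalRing.maximalIdeal R with hMdef
  have hMtop : M ≠ ⊤ := (IsLocalRing.maximalIdeal.isMaximal R).ne_top
  have one_not_mem : (1 : R) ∉ M := fun h => hMtop ((Ideal.eq_top_iff_one M).mpr h)
  -- a small helper : `1 ∉ (M : FracId R)`
  have key1m : (1 : FractionRing R) ∉ (M : FracId R) := by
    intro hle
    obtain ⟨m, hmM, hm1⟩ := (mem_coeIdeal _).mp hle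
    have : m = 1 := IsFractionRing.injective R (FractionRing R)
      (by rw [hm1, _root_.map_one])
    exact one_not_mem (this ▸ hmM)
  have key1 : ¬ ((1 : FracId R) ≤ (M : FracId R)) := fun hle =>
    key1m (spFracId_le_iff.mp hle 1 (one_mem_one _))
  tfae_have 3 → 4 := by
    intro h3 s hft
    obtain ⟨I, hI0, hIfg, hIM, hinv⟩ := h3
    have hM0 : M ≠ ⊥ := fun hb => hI0 (le_bot_iff.mp (hb ▸ hIM))
    have hstarM : s.star (M : FracId R) = (M : FracId R) :=
      sp_star_coeIdeal_of_dsp s hft ⟨I, hI0, hIfg, hIM, hinv⟩ hM0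
    have hMstarIdeal : s.IsStarIdeal M := ⟨hM0, hstarM⟩
    have hMmax : s.IsMaxStarIdeal M :=
      ⟨hMtop, hMstarIdeal, fun J hJtop _ hMJ =>
        le_antisymm (IsLocalRing.le_maximalIdeal hJtop) hMJ⟩
    refine ⟨hMmax, I, ⟨⟨hI0, hIfg, M, ⟨hMmax, hIM⟩, ?_⟩, ?_⟩, hIM⟩
    · rintro M' ⟨hM'max, _⟩
      exact (hM'max.2.2 M hMtop hMstarIdeal (IsLocalRing.le_maximalIdeal hM'max.1)).symm
    · intro J hJfg hIJ
      obtain ⟨hJ0, hJinv⟩ := hinv J hJfg hIJ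
      exact ⟨hJ0, by rw [hJinv, s.star_one]⟩
  tfae_have 3 → 2 := by
    intro h3
    obtain ⟨I, hI0, hIfg, hIM, hinv⟩ := h3
    have hM0 : M ≠ ⊥ := fun hb => hI0 (le_bot_iff.mp (hb ▸ hIM))
    have htM : IsTIdeal M := ⟨hM0, sp_tOp_coeIdeal_of_dsp ⟨I, hI0, hIfg, hIM, hinv⟩ hM0⟩
    have hMmax : IsMaxTIdeal M :=
      ⟨hMtop, htM, fun J hJtop _ hMJ => le_antisymm (IsLocalRing.le_maximalIdeal hJtop) hMJ⟩
    refine ⟨hMmax, I, ⟨⟨hI0, hIfg, M, ⟨hMmax, hIM⟩, ?_⟩, ?_⟩, hIM⟩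
    · rintro M' ⟨hM'max, _⟩
      exact (hM'max.2.2 M hMtop htM (IsLocalRing.le_maximalIdeal hM'max.1)).symm
    · intro J hJfg hIJ
      obtain ⟨hJ0, hJinv⟩ := hinv J hJfg hIJ
      refine ⟨hJ0, ?_⟩
      rw [hJinv]
      exact sp_tOp_one
  tfae_have 4 → 1 := fun h4 => ⟨dOp, dOp_finiteType, h4 dOp dOp_finiteType⟩
  tfae_have 1 → 3 := by
    rintro ⟨s, _, hMmax, I, ⟨⟨hI0, hIfg, _⟩, hSRinv⟩, hIM⟩
    have hM0 : M ≠ ⊥ := hMmax.2.1.1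
    have hstarM : s.star (M : FracId R) = (M : FracId R) := hMmax.2.1.2
    refine ⟨I, hI0, hIfg, hIM, fun J hJfg hIJ => ?_⟩
    obtain ⟨hJ0, hJstar⟩ := hSRinv J hJfg hIJ
    refine ⟨hJ0, ?_⟩
    set P := (J : FracId R) * ((1 : FracId R) / (J : FracId R)) with hPdef
    have hP1 : P ≤ 1 := mul_one_div_le_one
    have hPne : P ≠ 0 := by
      intro h0
      have hJle : (J : FracId R) ≤ P := le_self_mul_one_div coeIdeal_le_one
      rw [h0, FractionalIdeal.le_zero_iff] at hJle
      exact (coeIdeal_ne_zero.mpr hJ0) hJle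
    by_contra hPne1
    obtain ⟨K₀, hK₀⟩ := le_one_iff_exists_coeIdeal.mp hP1
    have hK₀top : K₀ ≠ ⊤ := by
      rintro rfl
      rw [coeIdeal_top] at hK₀
      exact hPne1 hK₀.symm
    have hPM : P ≤ (M : FracId R) := by
      rw [← hK₀]
      exact (coeIdeal_le_coeIdeal _).mpr (IsLocalRing.le_maximalIdeal hK₀top)
    have := s.star_mono P (M : FracId R) hPne (coeIdeal_ne_zero.mpr hM0) hPM
    rw [hJstar, hstarM] at this
    exact key1 this
  tfae_have 2 → 3 := by
    rintro ⟨hMmax, I, ⟨⟨hI0, hIfg, _⟩, hSRinv⟩, hIM⟩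
    have htM : tOp (M : FracId R) = ((M : FracId R) : Submodule R (FractionRing R)) :=
      hMmax.2.1.2
    refine ⟨I, hI0, hIfg, hIM, fun J hJfg hIJ => ?_⟩
    obtain ⟨hJ0, hJt⟩ := hSRinv J hJfg hIJ
    refine ⟨hJ0, ?_⟩
    set P := (J : FracId R) * ((1 : FracId R) / (J : FracId R)) with hPdef
    have hP1 : P ≤ 1 := mul_one_div_le_one
    by_contra hPne1
    obtain ⟨K₀, hK₀⟩ := le_one_iff_exists_coeIdeal.mp hP1
    have hK₀top : K₀ ≠ ⊤ := by
      rintro rfl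
      rw [coeIdeal_top] at hK₀
      refine hPne1 ?_
      rw [← hK₀]
    have hPM : P ≤ (M : FracId R) := by
      rw [← hK₀]
      exact (coeIdeal_le_coeIdeal _).mpr (IsLocalRing.le_maximalIdeal hK₀top)
    have hmono := sp_tOp_mono hPM
    rw [hJt, htM] at hmono
    have h1M : (1 : FractionRing R) ∈ ((M : FracId R) : Submodule R (FractionRing R)) :=
      hmono (by rw [FractionalIdeal.coe_one]; exact Submodule.one_le.mp le_rfl)
    exact key1m (FractionalIdeal.mem_coe.mp h1M)
  tfae_finish
end

section
/- Let ⋆ be a finite-type star operation on an integral domain R and let M be a maximal ⋆-ideal of R. Then M is ⋆-super potent if and only if M is ⋆-potent and the maximal ideal MR_M of the localization R_M is d-super potent (i.e., MR_M contains a nonzero finitely generated ideal A such that every finitely generated ideal of R_M containing A is invertible). -/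
open FractionalIdeal

section SuperPotentHelpers

set_option maxHeartbeats 1600000
set_option synthInstance.maxHeartbeats 400000

open FractionalIdeal

variable {R : Type*} [CommRing R] [IsDomain R]

private theorem spp_coe_ne {I : Ideal R} (hI : I ≠ ⊥) : (I : FracId R) ≠ 0 :=
  coeIdeal_ne_zero.mpr hI

private theorem spp_one_le_one_div {J : Ideal R} (hJ : J ≠ ⊥) :
    (1 : FracId R) ≤ 1 / (J : FracId R) := by
  rw [le_div_iff_mul_le (spp_coe_ne hJ), one_mul]
  exact coeIdeal_le_one

private theorem spp_le_mul_one_div {J : Ideal R} (hJ : J ≠ ⊥) :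
    (J : FracId R) ≤ (J : FracId R) * (1 / (J : FracId R)) := by
  calc (J : FracId R) = (J : FracId R) * 1 := (mul_one _).symm
  _ ≤ (J : FracId R) * (1 / (J : FracId R)) := mul_right_mono (spp_one_le_one_div hJ)

private theorem spp_prod_ne {J : Ideal R} (hJ : J ≠ ⊥) :
    (J : FracId R) * (1 / (J : FracId R)) ≠ 0 := by
  intro h
  exact spp_coe_ne hJ (le_antisymm (by simpa [h] using spp_le_mul_one_div hJ) (zero_le _))

private theorem spp_exists_max (s : StarOp R) (hft : s.FiniteType) {C : Ideal R}
    (hC0 : C ≠ ⊥) (hCtop : C ≠ ⊤) (hCst : s.IsStarIdeal C) :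
    ∃ N : Ideal R, s.IsMaxStarIdeal N ∧ C ≤ N := by
  classical
  have hub : ∀ c ⊆ {J : Ideal R | J ≠ ⊤ ∧ s.IsStarIdeal J}, IsChain (· ≤ ·) c →
      ∀ y ∈ c, ∃ ub ∈ {J : Ideal R | J ≠ ⊤ ∧ s.IsStarIdeal J}, ∀ z ∈ c, z ≤ ub := ?_
  case _ =>
    obtain ⟨N, hCN, hNmax⟩ :=
      zorn_le_nonempty₀ {J : Ideal R | J ≠ ⊤ ∧ s.IsStarIdeal J} hub C ⟨hCtop, hCst⟩
    exact ⟨N, ⟨hNmax.1.1, hNmax.1.2,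
      fun J hJt hJs hNJ => le_antisymm (hNmax.2 ⟨hJt, hJs⟩ hNJ) hNJ⟩, hCN⟩
  intro c hcS hchain y hy
  have hmem : ∀ z : R, z ∈ sSup c ↔ ∃ i ∈ c, z ∈ i := fun z =>
    Submodule.mem_sSup_of_directed ⟨y, hy⟩ hchain.directedOn
  have hUtop : sSup c ≠ ⊤ := by
    intro h
    obtain ⟨i, hic, hi⟩ := (hmem 1).mp (h ▸ Submodule.mem_top)
    exact (hcS hic).1 ((Ideal.eq_top_iff_one i).mpr hi)
  have hUbot : sSup c ≠ ⊥ := by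
    intro h
    exact (hcS hy).2.1 (le_bot_iff.mp (h ▸ le_sSup hy))
  have hUne : ((sSup c : Ideal R) : FracId R) ≠ 0 := spp_coe_ne hUbot
  refine ⟨sSup c, ⟨hUtop, hUbot, ?_⟩, fun z hz => le_sSup hz⟩
  refine le_antisymm ?_ (s.le_star _ hUne)
  intro x hx
  obtain ⟨Jf, hJf0, hJfFG, hJfle, hxJf⟩ := (hft _ hUne x).mp hx
  obtain ⟨T, hT⟩ := hJfFG
  have key : ∀ T' : Finset (FractionRing R),
      (∀ g ∈ T', g ∈ ((sSup c : Ideal R) : FracId R)) →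
      ∃ Ci ∈ c, ∀ g ∈ T', g ∈ ((Ci : Ideal R) : FracId R) := by
    intro T'
    induction T' using Finset.induction_on with
    | empty => exact fun _ => ⟨y, hy, by simp⟩
    | @insert g T'' hg ih =>
      intro hall
      obtain ⟨Ci, hCi, hCiall⟩ := ih fun z hz => hall z (Finset.mem_insert_of_mem hz)
      obtain ⟨u, hu, huz⟩ := (mem_coeIdeal _).mp (hall g (Finset.mem_insert_self g T''))
      obtain ⟨Cg, hCg, hucg⟩ := (hmem u).mp hu
      rcases eq_or_ne Ci Cg with rfl | hne
      · refine ⟨Ci, hCi, ?_⟩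
        intro z hz
        rcases Finset.mem_insert.mp hz with rfl | hz
        · exact (mem_coeIdeal _).mpr ⟨u, hucg, huz⟩
        · exact hCiall z hz
      rcases hchain.total hCi hCg with hle | hle
      · refine ⟨Cg, hCg, ?_⟩
        intro z hz
        rcases Finset.mem_insert.mp hz with rfl | hz
        · exact (mem_coeIdeal _).mpr ⟨u, hucg, huz⟩
        · exact (coeIdeal_le_coeIdeal _).mpr hle (hCiall z hz)
      · refine ⟨Ci, hCi, ?_⟩
        intro z hz
        rcases Finset.mem_insert.mp hz with rfl | hz
        · exact (mem_coeIdeal _).mpr ⟨u, hle hucg, huz⟩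
        · exact hCiall z hz
  have hgen : ∀ g ∈ T, g ∈ ((sSup c : Ideal R) : FracId R) := by
    intro g hg
    have hmem' : g ∈ (Jf : Submodule R (FractionRing R)) := hT ▸ Submodule.subset_span hg
    exact hJfle (mem_coe.mp hmem')
  obtain ⟨Ci, hCi, hCiall⟩ := key T hgen
  have hJfCi : Jf ≤ ((Ci : Ideal R) : FracId R) := by
    intro z hz
    have hz' : z ∈ (Jf : Submodule R (FractionRing R)) := mem_coe.mpr hz
    rw [← hT] at hz'
    refine Submodule.span_induction (fun g hg => hCiall g hg)
      (mem_coe.mp (Submodule.zero_mem _))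
      (fun a b _ _ ha hb => mem_coe.mp (Submodule.add_mem _ (mem_coe.mpr ha) (mem_coe.mpr hb)))
      (fun r a _ ha => mem_coe.mp (Submodule.smul_mem _ r (mem_coe.mpr ha))) hz'
  have hCibot : (Ci : Ideal R) ≠ ⊥ := (hcS hCi).2.1
  have hx2 : x ∈ s.star ((Ci : Ideal R) : FracId R) :=
    s.star_mono Jf _ hJf0 (spp_coe_ne hCibot) hJfCi hxJf
  rw [(hcS hCi).2.2] at hx2
  exact (coeIdeal_le_coeIdeal _).mpr (le_sSup hCi) hx2

private theorem spp_starInv (s : StarOp R) (hft : s.FiniteType) {M I J : Ideal R}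
    (hM : s.IsMaxStarIdeal M) (hI0 : I ≠ ⊥) (hIJ : I ≤ J)
    (huni : ∀ N : Ideal R, s.IsMaxStarIdeal N → I ≤ N → N = M) {T : R} (hT : T ∉ M)
    (hTmem : algebraMap R (FractionRing R) T ∈
      ((J : FracId R) * ((1 : FracId R) / (J : FracId R)))) :
    s.IsStarInvertible J := by
  have hJ0 : J ≠ ⊥ := fun h => hI0 (le_bot_iff.mp (h ▸ hIJ))
  set F := (J : FracId R) * ((1 : FracId R) / (J : FracId R)) with hF
  have hF0 : F ≠ 0 := spp_prod_ne hJ0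
  have hFle1 : F ≤ 1 := mul_one_div_le_one
  have hEle1 : s.star F ≤ 1 := by
    have h := s.star_mono F 1 hF0 one_ne_zero hFle1
    rwa [s.star_one] at h
  refine ⟨hJ0, ?_⟩
  by_contra hE
  obtain ⟨C, hC⟩ := le_one_iff_exists_coeIdeal.mp hEle1
  have hCtop : C ≠ ⊤ := fun h => hE (by rw [← hC, h, coeIdeal_top])
  have hTC : T ∈ C := by
    have h1 : algebraMap R (FractionRing R) T ∈ s.star F := s.le_star F hF0 hTmem
    rw [← hC] at h1
    obtain ⟨t', ht', htt⟩ := (mem_coeIdeal _).mp h1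
    rwa [← IsFractionRing.injective R (FractionRing R) htt]
  have hC0 : C ≠ ⊥ := by
    intro h
    rw [h, Submodule.mem_bot] at hTC
    rw [hTC] at hT
    exact hT M.zero_mem
  have hCst : s.IsStarIdeal C := ⟨hC0, by rw [hC]; exact s.star_idem F hF0⟩
  obtain ⟨N, hN, hCN⟩ := spp_exists_max s hft hC0 hCtop hCst
  have hIC : I ≤ C := by
    refine (coeIdeal_le_coeIdeal (FractionRing R)).mp ?_
    calc (I : FracId R) ≤ (J : FracId R) := (coeIdeal_le_coeIdeal _).mpr hIJ
    _ ≤ F := spp_le_mul_one_div hJ0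
    _ ≤ s.star F := s.le_star F hF0
    _ = (C : FracId R) := hC.symm
  have hNM : N = M := huni N hN (hIC.trans hCN)
  exact hT (hNM ▸ hCN hTC)

private theorem spp_exists_locgen (s : StarOp R) {M J : Ideal R}
    (hMtop : M ≠ ⊤) (hMst : s.IsStarIdeal M) (hJ0 : J ≠ ⊥)
    (hinv : s.star ((J : FracId R) * ((1 : FracId R) / (J : FracId R))) = 1) :
    ∃ a v : R, a ∈ J ∧ v ∉ M ∧ ∀ x ∈ J, ∃ r : R, x * v = a * r := by
  have hnotle : ¬ ((J : FracId R) * ((1 : FracId R) / (J : FracId R)) ≤ (M : FracId R)) := by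
    intro h
    have h1 : (1 : FracId R) ≤ (M : FracId R) := by
      rw [← hinv, ← hMst.2]
      exact s.star_mono _ _ (spp_prod_ne hJ0) (spp_coe_ne hMst.1) h
    rw [← coeIdeal_top] at h1
    exact hMtop (top_le_iff.mp ((coeIdeal_le_coeIdeal (FractionRing R)).mp h1))
  obtain ⟨ξ, hξF, hξM⟩ : ∃ ξ, ξ ∈ (J : FracId R) * ((1 : FracId R) / (J : FracId R)) ∧
      ξ ∉ (M : FracId R) := by
    by_contra hcon
    push_neg at hcon
    exact hnotle fun z hz => hcon z hz
  have hξ' : ξ ∈ ((J : FracId R) : Submodule R (FractionRing R)) *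
      (((1 : FracId R) / (J : FracId R) : FracId R) : Submodule R (FractionRing R)) := by
    rw [← coe_mul]
    exact mem_coe.mpr hξF
  have hP : ξ ∈ ((M : FracId R) : Submodule R (FractionRing R)) ∨
      ∃ a v : R, a ∈ J ∧ v ∉ M ∧ ∀ x ∈ J, ∃ r : R, x * v = a * r := by
    refine Submodule.mul_induction_on hξ' ?_ ?_
    · intro m hm n hn
      obtain ⟨a, haJ, ham⟩ := (mem_coeIdeal _).mp (mem_coe.mp hm)
      have hn' : ∀ z ∈ (J : FracId R), n * z ∈ (1 : FracId R) :=
        (mem_div_iff_of_ne_zero (spp_coe_ne hJ0)).mp (mem_coe.mp hn)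
      have hmn1 : m * n ∈ (1 : FracId R) := by
        rw [← ham, mul_comm]
        exact hn' _ ((mem_coeIdeal _).mpr ⟨a, haJ, rfl⟩)
      obtain ⟨v, hv⟩ := (mem_one_iff _).mp hmn1
      by_cases hvM : v ∈ M
      · left
        rw [← hv]
        exact mem_coe.mpr ((mem_coeIdeal _).mpr ⟨v, hvM, rfl⟩)
      · right
        refine ⟨a, v, haJ, hvM, ?_⟩
        intro x hx
        obtain ⟨r, hr⟩ := (mem_one_iff _).mp
          (hn' _ ((mem_coeIdeal _).mpr ⟨x, hx, rfl⟩))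
        refine ⟨r, IsFractionRing.injective R (FractionRing R) ?_⟩
        rw [_root_.map_mul, _root_.map_mul, hv, hr, ham]
        ring
    · intro z₁ z₂ h1 h2
      rcases h1 with h1 | h1
      · rcases h2 with h2 | h2
        · exact Or.inl (add_mem h1 h2)
        · exact Or.inr h2
      · exact Or.inr h1
  rcases hP with h | h
  · exact absurd (mem_coe.mp h) hξM
  · exact h

private theorem spp_map_principal (M : Ideal R) [M.IsPrime] {J : Ideal R} {a v : R}
    (hv : v ∉ M) (ha : a ∈ J) (h : ∀ x ∈ J, ∃ r : R, x * v = a * r) :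
    J.map (algebraMap R (Localization.AtPrime M)) =
      Ideal.span {algebraMap R (Localization.AtPrime M) a} := by
  apply le_antisymm
  · rw [Ideal.map_le_iff_le_comap]
    intro x hx
    obtain ⟨r, hr⟩ := h x hx
    have hu : IsUnit (algebraMap R (Localization.AtPrime M) v) :=
      (IsLocalization.AtPrime.isUnit_to_map_iff (Localization.AtPrime M) M v).mpr hv
    obtain ⟨w, hw⟩ := isUnit_iff_exists_inv.mp hu
    rw [Ideal.mem_comap, Ideal.mem_span_singleton']
    refine ⟨algebraMap R _ r * w, ?_⟩
    have h2 : algebraMap R (Localization.AtPrime M) (x * v) = algebraMap R _ (a * r) := by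
      rw [hr]
    rw [_root_.map_mul, _root_.map_mul] at h2
    calc algebraMap R (Localization.AtPrime M) r * w * algebraMap R _ a
        = algebraMap R _ a * algebraMap R _ r * w := by ring
      _ = algebraMap R _ x * algebraMap R _ v * w := by rw [← h2]
      _ = algebraMap R _ x * (algebraMap R _ v * w) := by ring
      _ = algebraMap R _ x := by rw [hw, mul_one]
  · rw [Ideal.span_le, Set.singleton_subset_iff]
    exact Ideal.mem_map_of_mem _ ha

private theorem spp_inv_span_singleton {A : Type*} [CommRing A] [IsDomain A] {c : A}
    (hc : c ≠ 0) : IsInvertibleIdeal (Ideal.span {c}) := by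
  constructor
  · simpa [Ideal.span_singleton_eq_bot] using hc
  · have hc' : algebraMap A (FractionRing A) c ≠ 0 :=
      (map_ne_zero_iff _ (IsFractionRing.injective A (FractionRing A))).mpr hc
    rw [coeIdeal_span_singleton, one_div_spanSingleton, spanSingleton_mul_spanSingleton,
      mul_inv_cancel₀ hc', spanSingleton_one]

private theorem spp_exists_contract (M : Ideal R) [M.IsPrime]
    (J' : Ideal (Localization.AtPrime M)) (hfg : J'.FG) :
    ∃ A₀ : Ideal R, A₀.FG ∧ A₀.map (algebraMap R (Localization.AtPrime M)) = J' := by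
  classical
  obtain ⟨S, hS⟩ := hfg
  obtain ⟨b, hb⟩ := IsLocalization.exist_integer_multiples M.primeCompl S
    (id : Localization.AtPrime M → Localization.AtPrime M)
  set φ := algebraMap R (Localization.AtPrime M) with hφ
  set cfun : Localization.AtPrime M → R := fun x =>
    if h : ∃ r : R, φ r = (b : R) • x then h.choose else 0 with hcfun
  have hcspec : ∀ x ∈ S, φ (cfun x) = φ (b : R) * x := by
    intro x hxS
    obtain ⟨r, hr⟩ := hb x hxS
    have hex : ∃ r : R, φ r = (b : R) • x := ⟨r, hr⟩
    rw [hcfun]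
    simp only [dif_pos hex]
    rw [hex.choose_spec, Algebra.smul_def]
  refine ⟨Ideal.span (cfun '' ↑S), ?_, ?_⟩
  · rw [← Finset.coe_image]
    exact Submodule.fg_span (S.image cfun).finite_toSet
  · rw [Ideal.map_span, ← hS]
    apply le_antisymm
    · rw [Ideal.span_le]
      rintro x' ⟨y, ⟨x, hxS, rfl⟩, rfl⟩
      rw [hcspec x hxS]
      exact Ideal.mul_mem_left _ _ (Ideal.subset_span hxS)
    · rw [Ideal.span_le]
      intro x hxS
      obtain ⟨w, hw⟩ := isUnit_iff_exists_inv.mp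
        (IsLocalization.map_units (Localization.AtPrime M) b)
      have hx' : x = w * φ (cfun x) := by
        rw [hcspec x hxS, ← mul_assoc, mul_comm w, hw, one_mul]
      rw [hx']
      exact Ideal.mul_mem_left _ _ (Ideal.subset_span ⟨cfun x, ⟨x, hxS, rfl⟩, rfl⟩)

private theorem spp_denom_of_mem_map (M : Ideal R) [hMp : M.IsPrime] {J : Ideal R}
    {w : Localization.AtPrime M} (hw : w ∈ J.map (algebraMap R (Localization.AtPrime M))) :
    ∃ u : R, u ∉ M ∧ ∃ j : R, j ∈ J ∧
      algebraMap R (Localization.AtPrime M) u * w = algebraMap R (Localization.AtPrime M) j := by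
  have hone : (1 : R) ∉ M := fun h => hMp.ne_top ((Ideal.eq_top_iff_one M).mpr h)
  refine Submodule.span_induction ?_ ?_ ?_ ?_ hw
  · rintro x ⟨j, hj, rfl⟩
    exact ⟨1, hone, j, hj, by rw [_root_.map_one, one_mul]⟩
  · exact ⟨1, hone, 0, zero_mem _, by rw [mul_zero, _root_.map_zero]⟩
  · rintro x y _ _ ⟨u₁, hu₁, j₁, hj₁, hx⟩ ⟨u₂, hu₂, j₂, hj₂, hy⟩
    refine ⟨u₁ * u₂, fun hmem => (hMp.mem_or_mem hmem).elim hu₁ hu₂,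
      u₂ * j₁ + u₁ * j₂, add_mem (Ideal.mul_mem_left _ _ hj₁) (Ideal.mul_mem_left _ _ hj₂), ?_⟩
    rw [_root_.map_mul, _root_.map_add, _root_.map_mul, _root_.map_mul]
    calc algebraMap R (Localization.AtPrime M) u₁ * algebraMap R _ u₂ * (x + y)
        = algebraMap R _ u₂ * (algebraMap R _ u₁ * x) +
          algebraMap R _ u₁ * (algebraMap R _ u₂ * y) := by ring
      _ = _ := by rw [hx, hy]
  · rintro c x _ ⟨u, hu, j, hj, hx⟩
    obtain ⟨⟨rc, uc⟩, hrc⟩ := IsLocalization.mk'_surjective M.primeCompl c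
    have hucc : algebraMap R (Localization.AtPrime M) (uc : R) * c = algebraMap R _ rc := by
      rw [← hrc]
      exact IsLocalization.mk'_spec' _ rc uc
    refine ⟨(uc : R) * u, fun hmem => (hMp.mem_or_mem hmem).elim uc.2 hu,
      rc * j, Ideal.mul_mem_left _ _ hj, ?_⟩
    rw [smul_eq_mul, _root_.map_mul, _root_.map_mul]
    calc algebraMap R (Localization.AtPrime M) (uc : R) * algebraMap R _ u * (c * x)
        = (algebraMap R _ (uc : R) * c) * (algebraMap R _ u * x) := by ring
      _ = algebraMap R _ rc * algebraMap R _ j := by rw [hucc, hx]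
      _ = _ := by rw [← _root_.map_mul]

attribute [-instance] instAlgebraAtPrimeFractionRing

private theorem spp_exists_T (M : Ideal R) [hMp : M.IsPrime] {J : Ideal R} (hJ0 : J ≠ ⊥)
    (hJfg : J.FG)
    (hinv : (↑(J.map (algebraMap R (Localization.AtPrime M))) :
          FracId (Localization.AtPrime M)) *
        ((1 : FracId (Localization.AtPrime M)) /
          ↑(J.map (algebraMap R (Localization.AtPrime M)))) = 1) :
    ∃ T : R, T ∉ M ∧ algebraMap R (FractionRing R) T ∈
      ((J : FracId R) * ((1 : FracId R) / (J : FracId R))) := by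
  classical
  set φ := algebraMap R (Localization.AtPrime M) with hφdef
  set ψ := algebraMap (Localization.AtPrime M)
    (FractionRing (Localization.AtPrime M)) with hψdef
  set e : FractionRing (Localization.AtPrime M) ≃ₐ[Localization.AtPrime M] FractionRing R :=
    FractionRing.algEquiv (Localization.AtPrime M) (FractionRing R) with hedef
  have he : ∀ x : R, e (ψ (φ x)) = algebraMap R (FractionRing R) x := by
    intro x
    rw [hedef, hψdef, AlgEquiv.commutes]
    exact (IsScalarTower.algebraMap_apply R (Localization.AtPrime M) (FractionRing R) x).symm
  have hφinj : Function.Injective φ :=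
    IsLocalization.injective (Localization.AtPrime M) M.primeCompl_le_nonZeroDivisors
  have hJm0 : J.map φ ≠ ⊥ :=
    fun h => hJ0 ((Ideal.map_eq_bot_iff_of_injective hφinj).mp h)
  have hJmne : (↑(J.map φ) : FracId (Localization.AtPrime M)) ≠ 0 := coeIdeal_ne_zero.mpr hJm0
  obtain ⟨G, hG⟩ := hJfg
  have h1 : (1 : FractionRing (Localization.AtPrime M)) ∈
      ((↑(J.map φ) : FracId (Localization.AtPrime M)) :
        Submodule (Localization.AtPrime M) (FractionRing (Localization.AtPrime M))) *
      (((1 : FracId (Localization.AtPrime M)) / ↑(J.map φ) :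
          FracId (Localization.AtPrime M)) :
        Submodule (Localization.AtPrime M) (FractionRing (Localization.AtPrime M))) := by
    rw [← coe_mul, hinv]
    exact mem_coe.mpr (one_mem_one _)
  have key : ∀ z : FractionRing (Localization.AtPrime M),
      z ∈ ((↑(J.map φ) : FracId (Localization.AtPrime M)) :
        Submodule (Localization.AtPrime M) (FractionRing (Localization.AtPrime M))) *
      (((1 : FracId (Localization.AtPrime M)) / ↑(J.map φ) :
          FracId (Localization.AtPrime M)) :
        Submodule (Localization.AtPrime M) (FractionRing (Localization.AtPrime M))) →
      ∃ T : R, T ∉ M ∧ algebraMap R (FractionRing R) T * e z ∈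
        (((J : FracId R) * ((1 : FracId R) / (J : FracId R)) : FracId R) :
          Submodule R (FractionRing R)) := by
    intro z hz
    refine Submodule.mul_induction_on hz ?_ ?_
    · intro m hm n hn
      obtain ⟨w, hwJ, hwm⟩ := (mem_coeIdeal _).mp (mem_coe.mp hm)
      obtain ⟨u, huM, j, hjJ, hjw⟩ := spp_denom_of_mem_map M hwJ
      have hn' : ∀ z' ∈ (↑(J.map φ) : FracId (Localization.AtPrime M)),
          n * z' ∈ (1 : FracId (Localization.AtPrime M)) :=
        (mem_div_iff_of_ne_zero hJmne).mp (mem_coe.mp hn)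
      set vf : R → Localization.AtPrime M := fun g =>
        if h : ∃ v : Localization.AtPrime M, ψ v = n * ψ (φ g) then h.choose else 0 with hvf
      have hvfs : ∀ g, g ∈ J → ψ (vf g) = n * ψ (φ g) := by
        intro g hg
        have hmem : n * ψ (φ g) ∈ (1 : FracId (Localization.AtPrime M)) :=
          hn' _ ((mem_coeIdeal _).mpr ⟨φ g, Ideal.mem_map_of_mem _ hg, rfl⟩)
        obtain ⟨v, hv⟩ := (mem_one_iff _).mp hmem
        have hex : ∃ v : Localization.AtPrime M, ψ v = n * ψ (φ g) := ⟨v, hv⟩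
        rw [hvf]
        simpa only [dif_pos hex] using hex.choose_spec
      obtain ⟨t, ht⟩ := IsLocalization.exist_integer_multiples M.primeCompl G vf
      set rf : R → R := fun g =>
        if h : ∃ r : R, φ r = (t : R) • vf g then h.choose else 0 with hrf
      have hrfs : ∀ g ∈ G, φ (rf g) = φ (t : R) * vf g := by
        intro g hg
        obtain ⟨r, hr⟩ := ht g hg
        have hex : ∃ r : R, φ r = (t : R) • vf g := ⟨r, hr⟩
        rw [hrf]
        simp only [dif_pos hex]
        rw [hex.choose_spec, Algebra.smul_def]
      set b : FractionRing R := e (ψ (φ (t : R)) * n) with hbdef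
      have hb : b ∈ ((1 : FracId R) / (J : FracId R)) := by
        rw [mem_div_iff_of_ne_zero (coeIdeal_ne_zero.mpr hJ0)]
        intro z' hz'
        obtain ⟨x, hxJ, hxz⟩ := (mem_coeIdeal _).mp hz'
        rw [← hxz]
        have hxJ' : x ∈ Ideal.span (↑G : Set R) := by rw [hG]; exact hxJ
        refine Submodule.span_induction ?_ ?_ ?_ ?_ hxJ'
        · intro g hg
          have hgJ : g ∈ J := by rw [← hG]; exact Ideal.subset_span hg
          have hge : algebraMap R (FractionRing R) g = e (ψ (φ g)) := (he g).symm
          rw [hbdef, hge, ← _root_.map_mul]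
          have hcomp : ψ (φ (t : R)) * n * ψ (φ g) = ψ (φ (rf g)) := by
            rw [mul_assoc, ← hvfs g hgJ, ← _root_.map_mul, ← hrfs g hg]
          rw [hcomp, he]
          exact (mem_one_iff _).mpr ⟨rf g, rfl⟩
        · rw [_root_.map_zero, mul_zero]
          exact mem_coe.mp (Submodule.zero_mem _)
        · intro x₁ x₂ _ _ hx₁ hx₂
          rw [_root_.map_add, mul_add]
          exact mem_coe.mp (Submodule.add_mem _ (mem_coe.mpr hx₁) (mem_coe.mpr hx₂))
        · intro r x' _ hbx
          have hsm : b * algebraMap R (FractionRing R) (r • x') =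
              r • (b * algebraMap R (FractionRing R) x') := by
            rw [smul_eq_mul, _root_.map_mul, Algebra.smul_def]
            ring
          rw [hsm]
          exact mem_coe.mp (Submodule.smul_mem _ r (mem_coe.mpr hbx))
      refine ⟨u * (t : R), fun hmem => (hMp.mem_or_mem hmem).elim huM t.2, ?_⟩
      have hcalc0 : ψ (φ (u * (t : R))) * (m * n) = ψ (φ j) * (ψ (φ (t : R)) * n) := by
        rw [← hwm]
        calc ψ (φ (u * (t : R))) * (ψ w * n)
            = (ψ (φ u) * ψ w) * (ψ (φ (t : R)) * n) := by
              rw [_root_.map_mul φ, _root_.map_mul ψ]; ring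
          _ = ψ (φ u * w) * (ψ (φ (t : R)) * n) := by rw [_root_.map_mul ψ]
          _ = ψ (φ j) * (ψ (φ (t : R)) * n) := by rw [hjw]
      have hcalc : algebraMap R (FractionRing R) (u * (t : R)) * e (m * n) =
          algebraMap R (FractionRing R) j * b := by
        rw [← he (u * (t : R)), ← he j, hbdef, ← _root_.map_mul, ← _root_.map_mul, hcalc0]
      rw [hcalc]
      have hj' : algebraMap R (FractionRing R) j ∈ (J : FracId R) :=
        (mem_coeIdeal _).mpr ⟨j, hjJ, rfl⟩
      exact mem_coe.mpr (mul_mem_mul hj' hb)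
    · rintro x y ⟨T₁, hT₁, hm₁⟩ ⟨T₂, hT₂, hm₂⟩
      refine ⟨T₁ * T₂, fun hmem => (hMp.mem_or_mem hmem).elim hT₁ hT₂, ?_⟩
      have hsplit : algebraMap R (FractionRing R) (T₁ * T₂) * e (x + y) =
          T₂ • (algebraMap R (FractionRing R) T₁ * e x) +
          T₁ • (algebraMap R (FractionRing R) T₂ * e y) := by
        rw [_root_.map_add, _root_.map_mul, Algebra.smul_def, Algebra.smul_def]
        ring
      rw [hsplit]
      exact Submodule.add_mem _ (Submodule.smul_mem _ _ hm₁) (Submodule.smul_mem _ _ hm₂)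
  obtain ⟨T, hTM, hTmem⟩ := key 1 h1
  refine ⟨T, hTM, ?_⟩
  rw [_root_.map_one, mul_one] at hTmem
  exact mem_coe.mp hTmem

end SuperPotentHelpers

/-- For a finite-type star operation `⋆` and a maximal `⋆`-ideal `M`, `M` is
`⋆`-super potent iff `M` is `⋆`-potent and the maximal ideal `M R_M` of `R_M` is `d`-super
potent. -/
theorem superPotent_iff_potent_and_localization {R : Type*} [CommRing R] [IsDomain R]
    (s : StarOp R) (hft : s.FiniteType) (M : Ideal R) [M.IsPrime]
    (hM : s.IsMaxStarIdeal M) :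
    s.IsSuperPotent M ↔
      s.IsPotent M ∧
        IsDSuperPotent (IsLocalRing.maximalIdeal (Localization.AtPrime M)) := by
  classical
  have hφinj : Function.Injective (algebraMap R (Localization.AtPrime M)) :=
    IsLocalization.injective (Localization.AtPrime M) M.primeCompl_le_nonZeroDivisors
  constructor
  · rintro ⟨hM', I, ⟨⟨hI0, hIfg, hIuniq⟩, hSR⟩, hIM⟩
    refine ⟨⟨hM, I, ⟨hI0, hIfg, hIuniq⟩, hIM⟩, ?_⟩
    refine ⟨I.map (algebraMap R (Localization.AtPrime M)),
      fun h => hI0 ((Ideal.map_eq_bot_iff_of_injective hφinj).mp h), hIfg.map _, ?_, ?_⟩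
    · rw [Ideal.map_le_iff_le_comap, ← Ideal.under_def, Localization.AtPrime.comap_maximalIdeal]
      exact hIM
    · intro J' hJ'fg hJ'ge
      obtain ⟨A₀, hA₀fg, hA₀map⟩ := spp_exists_contract M J' hJ'fg
      have hJ₀fg : (I ⊔ A₀).FG := Submodule.FG.sup hIfg hA₀fg
      have hJ₀map : (I ⊔ A₀).map (algebraMap R (Localization.AtPrime M)) = J' := by
        rw [Ideal.map_sup, hA₀map]
        exact sup_eq_right.mpr hJ'ge
      obtain ⟨hJ₀0, hJ₀inv⟩ := hSR (I ⊔ A₀) hJ₀fg le_sup_left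
      obtain ⟨a, v, haJ₀, hvM, hav⟩ := spp_exists_locgen s hM.1 hM.2.1 hJ₀0 hJ₀inv
      have hprin : (I ⊔ A₀).map (algebraMap R (Localization.AtPrime M)) =
          Ideal.span {algebraMap R (Localization.AtPrime M) a} :=
        spp_map_principal M hvM haJ₀ hav
      have hJ'0 : J' ≠ ⊥ := by
        intro h
        apply hI0
        apply (Ideal.map_eq_bot_iff_of_injective hφinj).mp
        exact le_bot_iff.mp (h ▸ hJ'ge)
      have hφa : algebraMap R (Localization.AtPrime M) a ≠ 0 := by
        intro h
        apply hJ'0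
        rw [← hJ₀map, hprin, h]
        exact Ideal.span_singleton_eq_bot.mpr rfl
      rw [← hJ₀map, hprin]
      exact spp_inv_span_singleton hφa
  · rintro ⟨⟨_, I₀, hRig₀, hI₀M⟩, A', hA'0, hA'fg, hA'le, hA'inv⟩
    obtain ⟨A₀, hA₀fg, hA₀map⟩ := spp_exists_contract M A' hA'fg
    have hA₀M : A₀ ≤ M := by
      intro x hx
      have hmem : algebraMap R (Localization.AtPrime M) x ∈
          IsLocalRing.maximalIdeal (Localization.AtPrime M) :=
        hA'le (hA₀map ▸ Ideal.mem_map_of_mem _ hx)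
      exact (IsLocalization.AtPrime.to_map_mem_maximal_iff (Localization.AtPrime M) M x).mp hmem
    have hA₀0 : A₀ ≠ ⊥ := fun h => hA'0 (by rw [← hA₀map, h, Ideal.map_bot])
    have hI0 : I₀ ⊔ A₀ ≠ ⊥ := fun h => hRig₀.1 (le_bot_iff.mp (h ▸ le_sup_left))
    have hIfg : (I₀ ⊔ A₀).FG := Submodule.FG.sup hRig₀.2.1 hA₀fg
    have hIM : I₀ ⊔ A₀ ≤ M := sup_le hI₀M hA₀M
    have huni : ∀ N : Ideal R, s.IsMaxStarIdeal N → I₀ ⊔ A₀ ≤ N → N = M := by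
      intro N hN hIN
      exact ExistsUnique.unique hRig₀.2.2 ⟨hN, le_trans le_sup_left hIN⟩ ⟨hM, hI₀M⟩
    refine ⟨hM, I₀ ⊔ A₀, ⟨⟨hI0, hIfg, M, ⟨hM, hIM⟩, fun N hN => huni N hN.1 hN.2⟩, ?_⟩, hIM⟩
    intro J hJfg hIJ
    have hmap_le : A' ≤ J.map (algebraMap R (Localization.AtPrime M)) := by
      rw [← hA₀map]
      exact Ideal.map_mono (le_trans le_sup_right hIJ)
    obtain ⟨hJm0, hJminv⟩ := hA'inv (J.map (algebraMap R (Localization.AtPrime M)))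
      (hJfg.map _) hmap_le
    have hJ0 : J ≠ ⊥ := fun h => hI0 (le_bot_iff.mp (h ▸ hIJ))
    obtain ⟨T, hTM, hTmem⟩ := spp_exists_T M hJ0 hJfg hJminv
    exact spp_starInv s hft hM hI0 hIJ huni hTM hTmem
end

section
/- Let (R, M) be a local integral domain, let ⋆ be a finite-type star operation on R such that M is a ⋆-super potent maximal ⋆-ideal, and let I be a ⋆-super rigid ideal of R contained in M. Then I is comparable under inclusion to every ideal of R (for every ideal A of R, either I ⊆ A or A ⊆ I), and the ideal ⋂_{n=1}^∞ Iⁿ is a prime ideal of R. -/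
open FractionalIdeal

section Aux

variable {R : Type*} [CommRing R] [IsDomain R] [IsLocalRing R]

/-- In a local domain where the maximal ideal is a star ideal, a star-invertible ideal is
actually invertible. -/
lemma aux_invertible (s : StarOp R)
    (hMstar : s.star ((IsLocalRing.maximalIdeal R : Ideal R) : FracId R) =
      ((IsLocalRing.maximalIdeal R : Ideal R) : FracId R))
    (J : Ideal R) (hJ0 : J ≠ ⊥)
    (hstar : s.star ((J : FracId R) * ((1 : FracId R) / (J : FracId R))) = 1) :
    (J : FracId R) * ((1 : FracId R) / (J : FracId R)) = 1 := by
  by_contra hne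
  have hA1 : (J : FracId R) * ((1 : FracId R) / (J : FracId R)) ≤ 1 :=
    FractionalIdeal.mul_one_div_le_one
  obtain ⟨A₀, hA₀⟩ := FractionalIdeal.le_one_iff_exists_coeIdeal.mp hA1
  have hJne : (J : FracId R) ≠ 0 := by
    simpa [FractionalIdeal.coeIdeal_eq_zero] using hJ0
  have h1le : (1 : FracId R) ≤ (1 : FracId R) / (J : FracId R) := by
    rw [FractionalIdeal.le_div_iff_mul_le hJne, one_mul]
    exact FractionalIdeal.coeIdeal_le_one
  have hJleA : (J : FracId R) ≤ (J : FracId R) * ((1 : FracId R) / (J : FracId R)) := by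
    conv_lhs => rw [← mul_one (J : FracId R)]
    exact mul_le_mul_right h1le _
  have hA₀ne : A₀ ≠ ⊥ := by
    intro h
    rw [h] at hA₀
    rw [← hA₀] at hJleA
    simp only [FractionalIdeal.coeIdeal_bot] at hJleA
    exact hJne (FractionalIdeal.le_zero_iff.mp hJleA)
  have hA₀top : A₀ ≠ ⊤ := by
    intro h
    rw [h, FractionalIdeal.coeIdeal_top] at hA₀
    exact hne hA₀.symm
  have hA₀M : A₀ ≤ IsLocalRing.maximalIdeal R := IsLocalRing.le_maximalIdeal hA₀top
  have hMne : (IsLocalRing.maximalIdeal R : Ideal R) ≠ ⊥ := by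
    intro h
    exact hA₀ne (le_bot_iff.mp (h ▸ hA₀M))
  have hmono : s.star ((A₀ : Ideal R) : FracId R) ≤
      s.star ((IsLocalRing.maximalIdeal R : Ideal R) : FracId R) := by
    refine s.star_mono _ _ ?_ ?_ ?_
    · simpa [FractionalIdeal.coeIdeal_eq_zero] using hA₀ne
    · simpa [FractionalIdeal.coeIdeal_eq_zero] using hMne
    · exact (FractionalIdeal.coeIdeal_le_coeIdeal _).mpr hA₀M
  rw [hA₀, hstar, hMstar] at hmono
  have htop : (⊤ : Ideal R) ≤ IsLocalRing.maximalIdeal R := by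
    rw [← FractionalIdeal.coeIdeal_le_coeIdeal (FractionRing R),
      FractionalIdeal.coeIdeal_top]
    exact hmono
  exact Ideal.IsMaximal.ne_top (IsLocalRing.maximalIdeal.isMaximal R) (top_le_iff.mp htop)

/-- Over a local ring, an invertible ideal is principal. -/
lemma aux_principal (J : Ideal R)
    (hinv : (J : FracId R) * ((1 : FracId R) / (J : FracId R)) = 1) :
    J.IsPrincipal := by
  have hfin : {P : Ideal R | P.IsMaximal}.Finite :=
    Set.Finite.subset (Set.finite_singleton (IsLocalRing.maximalIdeal R))
      (fun P hP => IsLocalRing.eq_maximalIdeal hP)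
  have h := FractionalIdeal.isPrincipal.of_finite_maximals_of_inv
    (le_refl (nonZeroDivisors R)) hfin (J : FracId R) ((1 : FracId R) / (J : FracId R)) hinv
  rw [FractionalIdeal.coe_coeIdeal] at h
  exact (IsFractionRing.coeSubmodule_isPrincipal (R := R) (FractionRing R)).mp h

end Aux

/-- In a local domain `(R, M)` with `M` a `⋆`-super potent maximal `⋆`-ideal for a
finite-type star operation `⋆`, a `⋆`-super rigid ideal `I ⊆ M` is comparable to every ideal of
`R`, and `⋂_{n≥1} Iⁿ` is prime. -/
theorem superRigid_comparable_and_inter_powers_prime {R : Type*} [CommRing R] [IsDomain R]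
    [IsLocalRing R] (s : StarOp R) (hft : s.FiniteType)
    (hM : s.IsSuperPotent (IsLocalRing.maximalIdeal R))
    (I : Ideal R) (hI : s.IsSuperRigid I) (hIM : I ≤ IsLocalRing.maximalIdeal R) :
    (∀ A : Ideal R, I ≤ A ∨ A ≤ I) ∧ (⨅ n : ℕ, I ^ (n + 1)).IsPrime := by
  have hMstar : s.star ((IsLocalRing.maximalIdeal R : Ideal R) : FracId R) =
      ((IsLocalRing.maximalIdeal R : Ideal R) : FracId R) := hM.1.2.1.2
  have hI0 : I ≠ ⊥ := hI.1.1
  have hIfg : I.FG := hI.1.2.1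
  -- every f.g. ideal containing I is principal
  have hprinc : ∀ J : Ideal R, J.FG → I ≤ J → ∃ d : R, J = Ideal.span {d} := by
    intro J hJfg hIJ
    have hJ0 : J ≠ ⊥ := fun h => hI0 (le_bot_iff.mp (h ▸ hIJ))
    have hstarinv := hI.2 J hJfg hIJ
    have hinv := aux_invertible s hMstar J hJ0 hstarinv.2
    obtain ⟨d, hd⟩ := aux_principal J hinv
    exact ⟨d, by simpa using hd⟩
  -- key comparability with principal ideals
  have key : ∀ a : R, a ∉ I → I ≤ Ideal.span {a} := by
    intro a ha
    obtain ⟨d, hd⟩ := hprinc (I ⊔ Ideal.span {a})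
      (Submodule.FG.sup hIfg (Submodule.fg_span_singleton a)) le_sup_left
    have hdJ : d ∈ I ⊔ Ideal.span {a} := hd ▸ Ideal.mem_span_singleton_self d
    obtain ⟨i, hi, z, hz, hsum⟩ := Submodule.mem_sup.mp hdJ
    obtain ⟨t, ht⟩ := Ideal.mem_span_singleton'.mp hz
    have haJ : a ∈ I ⊔ Ideal.span {a} := Ideal.mem_sup_right (Ideal.mem_span_singleton_self a)
    rw [hd, Ideal.mem_span_singleton'] at haJ
    obtain ⟨c, hc⟩ := haJ
    by_cases hcM : c ∈ IsLocalRing.maximalIdeal R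
    · exfalso
      have hunit : IsUnit (1 - t * c) :=
        IsLocalRing.isUnit_one_sub_self_of_mem_nonunits _
          ((IsLocalRing.mem_maximalIdeal _).mp (Ideal.mul_mem_left _ t hcM))
      have hdI : d ∈ I := by
        have heq : (1 - t * c) * d = i := by
          have h2 : i = d - t * a := by rw [← hsum, ← ht]; ring
          rw [h2, ← hc]; ring
        rw [← Ideal.unit_mul_mem_iff_mem I hunit, heq]
        exact hi
      exact ha (hc ▸ Ideal.mul_mem_left _ c hdI)
    · have hcu : IsUnit c := IsLocalRing.notMem_maximalIdeal.mp hcM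
      have hda : d ∈ Ideal.span {a} := by
        rw [← Ideal.unit_mul_mem_iff_mem _ hcu, hc]
        exact Ideal.mem_span_singleton_self a
      calc I ≤ I ⊔ Ideal.span {a} := le_sup_left
        _ = Ideal.span {d} := hd
        _ ≤ Ideal.span {a} := (Ideal.span_singleton_le_iff_mem _).mpr hda
  -- comparability with all ideals
  have comp : ∀ A : Ideal R, I ≤ A ∨ A ≤ I := by
    intro A
    by_cases hA : A ≤ I
    · exact Or.inr hA
    · obtain ⟨a, haA, haI⟩ := SetLike.not_le_iff_exists.mp hA
      exact Or.inl (le_trans (key a haI) ((Ideal.span_singleton_le_iff_mem _).mpr haA))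
  refine ⟨comp, ?_⟩
  -- I is principal, I = (x)
  obtain ⟨x, hx⟩ := hprinc I hIfg le_rfl
  have hx0 : x ≠ 0 := by
    intro h
    rw [h] at hx
    simp only [Ideal.span_singleton_eq_bot.mpr rfl] at hx
    exact hI0 hx
  have hxM : x ∈ IsLocalRing.maximalIdeal R := hIM (hx ▸ Ideal.mem_span_singleton_self x)
  have hxnu : ¬ IsUnit x := (IsLocalRing.mem_maximalIdeal _).mp hxM
  -- powers of x are comparable with everything
  have pow_mem : ∀ n : ℕ, ∀ a : R, a ∉ Ideal.span {x ^ (n + 1)} → x ^ (n + 1) ∈ Ideal.span {a} := by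
    intro n
    induction n with
    | zero =>
      intro a ha
      have haI : a ∉ I := by rw [hx]; simpa using ha
      have := key a haI
      rw [pow_one]
      exact this (hx ▸ Ideal.mem_span_singleton_self x)
    | succ n ih =>
      intro a ha
      by_cases hax : a ∈ Ideal.span {x}
      · obtain ⟨a₁, ha₁⟩ := Ideal.mem_span_singleton'.mp hax
        have ha₁' : a₁ ∉ Ideal.span {x ^ (n + 1)} := by
          intro h
          obtain ⟨r, hr⟩ := Ideal.mem_span_singleton'.mp h
          apply ha
          rw [Ideal.mem_span_singleton']
          exact ⟨r, by rw [← ha₁, ← hr]; ring⟩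
        obtain ⟨r, hr⟩ := Ideal.mem_span_singleton'.mp (ih a₁ ha₁')
        rw [Ideal.mem_span_singleton']
        exact ⟨r, by rw [← ha₁, ← mul_assoc, hr]; ring⟩
      · have haI : a ∉ I := by rw [hx]; exact hax
        have hxa : x ∈ Ideal.span {a} := key a haI (hx ▸ Ideal.mem_span_singleton_self x)
        obtain ⟨r, hr⟩ := Ideal.mem_span_singleton'.mp hxa
        rw [Ideal.mem_span_singleton']
        exact ⟨r * x ^ (n + 1), by
          rw [mul_assoc, mul_comm (x ^ (n + 1)) a, ← mul_assoc, hr]; ring⟩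
  -- the intersection of the powers is prime
  have hIpow : ∀ n : ℕ, I ^ n = Ideal.span {x ^ n} := by
    intro n
    rw [hx, Ideal.span_singleton_pow]
  rw [Ideal.isPrime_iff]
  constructor
  · intro h
    have hle : (⨅ n : ℕ, I ^ (n + 1)) ≤ I := by
      simpa using iInf_le (fun n : ℕ => I ^ (n + 1)) 0
    rw [h, top_le_iff] at hle
    rw [hle] at hIM
    exact Ideal.IsMaximal.ne_top (IsLocalRing.maximalIdeal.isMaximal R)
      (top_le_iff.mp hIM)
  · intro a b hab
    by_contra hcon
    push_neg at hcon
    obtain ⟨ha, hb⟩ := hcon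
    rw [Ideal.mem_iInf] at ha hb
    push_neg at ha hb
    obtain ⟨m, ham⟩ := ha
    obtain ⟨k, hbk⟩ := hb
    rw [hIpow] at ham hbk
    obtain ⟨r, hr⟩ := Ideal.mem_span_singleton'.mp (pow_mem m a ham)
    obtain ⟨t, ht⟩ := Ideal.mem_span_singleton'.mp (pow_mem k b hbk)
    have habP : a * b ∈ I ^ (m + k + 2 + 1) := by
      rw [Ideal.mem_iInf] at hab
      exact hab (m + k + 2)
    rw [hIpow] at habP
    obtain ⟨w, hw⟩ := Ideal.mem_span_singleton'.mp habP
    have heq : (r * t) * (a * b) = x ^ (m + k + 2) := by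
      rw [show (r * t) * (a * b) = (r * a) * (t * b) by ring, hr, ht, ← pow_add]
      congr 1
      ring
    have heq2 : ((r * t * w) * x) * x ^ (m + k + 2) = 1 * x ^ (m + k + 2) := by
      calc ((r * t * w) * x) * x ^ (m + k + 2)
          = (r * t) * (w * x ^ (m + k + 2 + 1)) := by ring
        _ = (r * t) * (a * b) := by rw [hw]
        _ = x ^ (m + k + 2) := heq
        _ = 1 * x ^ (m + k + 2) := (one_mul _).symm
    have h1 := mul_right_cancel₀ (pow_ne_zero _ hx0) heq2
    exact hxnu (IsUnit.of_mul_eq_one (r * t * w) (by rw [mul_comm]; exact h1))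
end
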